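/- arXiv:math/0408079 — 7 statements merged into one kernel-verified Lean document; each statement's English description precedes it below -/
import Mathlib

section
/- Let Ω ⊂ ℂ be open and simply connected, z₀ ∈ Ω, and h : Ω → ℂ holomorphic; write u = Re h, v = Im h, identify z = x+iy, and define F : Ω → ℝ³ by F(z) = Re ∫_{z₀}^{z} ((1/2)(e^{−i h(ζ)} − e^{i h(ζ)}), (i/2)(e^{−i h(ζ)} + e^{i h(ζ)}), 1) dζ. Then for every z ∈ Ω one has |∂ₓF(z)|² = |∂_yF(z)|² = cosh²(v(z)) and ⟨∂ₓF(z), ∂_yF(z)⟩ = 0; in particular ∂ₓF(z) and ∂_yF(z) are linearly independent at every point, so F is a conformal immersion. -/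
/-!
The tangent vectors of `F` are `∂ₓF = Re Φ` and `∂_yF = Re (i Φ) = -Im Φ`, where
`Φ = ((g⁻¹ - g)/2, i(g⁻¹ + g)/2, 1)` with `g = e^{ih}`. Since `Φ · Φ = 0`, the real and imaginary
parts of `Φ` are orthogonal and of equal length, namely `|Φ|/√2 = (|g|⁻¹ + |g|)/2 = cosh (Im h)`.
-/

open Complex Real Set Finset Filter RealInnerProductSpace

/-- Points of `ℝ³` as `EuclideanSpace`. -/
noncomputable def vec3 (a b c : ℝ) : EuclideanSpace ℝ (Fin 3) := WithLp.toLp 2 ![a, b, c]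

lemma norm_vec3_sq (a b c : ℝ) : ‖vec3 a b c‖ ^ 2 = a ^ 2 + b ^ 2 + c ^ 2 := by
  simp [vec3, EuclideanSpace.norm_sq_eq, Fin.sum_univ_three]

lemma inner_vec3 (a b c a' b' c' : ℝ) :
    ⟪vec3 a b c, vec3 a' b' c'⟫ = a * a' + b * b' + c * c' := by
  simp only [vec3, PiLp.inner_apply, RCLike.inner_apply, ringHom_apply, Fin.sum_univ_three,
    Fin.isValue, Matrix.cons_val_zero, Matrix.cons_val_one, Matrix.cons_val]
  ring

lemma HasDerivAt.vec3 {f₁ f₂ f₃ : ℝ → ℝ} {d₁ d₂ d₃ x : ℝ}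
    (h₁ : HasDerivAt f₁ d₁ x) (h₂ : HasDerivAt f₂ d₂ x) (h₃ : HasDerivAt f₃ d₃ x) :
    HasDerivAt (fun t => _root_.vec3 (f₁ t) (f₂ t) (f₃ t)) (_root_.vec3 d₁ d₂ d₃) x := by
  have hpi : HasDerivAt (fun t => ![f₁ t, f₂ t, f₃ t]) ![d₁, d₂, d₃] x := by
    rw [hasDerivAt_pi]
    intro i
    fin_cases i <;> simpa
  exact (EuclideanSpace.equiv (Fin 3) ℝ).symm.toContinuousLinearMap.hasFDerivAt.comp_hasDerivAt x
    hpi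

lemma HasDerivAt.re_comp_line {G : ℂ → ℂ} {d z : ℂ} (hG : HasDerivAt G d z) (w : ℂ) :
    HasDerivAt (fun t : ℝ => (G (z + t * w)).re) (d * w).re 0 := by
  have hline : HasDerivAt (fun ζ : ℂ => z + ζ * w) w ((0 : ℝ) : ℂ) := by
    simpa using ((hasDerivAt_id (0 : ℂ)).mul_const w).const_add z
  have hG' : HasDerivAt G d (z + ((0 : ℝ) : ℂ) * w) := by simpa using hG
  exact (hG'.comp (h := fun ζ : ℂ => z + ζ * w) _ hline).real_of_complex

lemma hasDerivAt_vec3_re_comp_line {Ω : Set ℂ} (hΩ : IsOpen Ω) {z : ℂ} (hz : z ∈ Ω)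
    {G₁ G₂ G₃ : ℂ → ℂ} {a b c : ℂ} (ha : HasDerivAt G₁ a z) (hb : HasDerivAt G₂ b z)
    (hc : HasDerivAt G₃ c z) {F : ℂ → EuclideanSpace ℝ (Fin 3)}
    (hF : ∀ z ∈ Ω, F z = vec3 (G₁ z).re (G₂ z).re (G₃ z).re) (w : ℂ) :
    HasDerivAt (fun t : ℝ => F (z + t * w)) (vec3 (a * w).re (b * w).re (c * w).re) 0 := by
  refine ((ha.re_comp_line w).vec3 (hb.re_comp_line w) (hc.re_comp_line w)).congr_of_eventuallyEq ?_
  have hline : Continuous fun t : ℝ => z + t * w := by fun_prop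
  have hmem : ∀ᶠ t : ℝ in nhds 0, z + t * w ∈ Ω :=
    hline.continuousAt.preimage_mem_nhds (by simpa using hΩ.mem_nhds hz)
  filter_upwards [hmem] with t ht
  exact hF _ ht

section Isotropic

variable {a b c : ℂ} (hnull : a ^ 2 + b ^ 2 + c ^ 2 = 0)
include hnull

lemma norm_vec3_re_sq_of_isotropic :
    ‖vec3 a.re b.re c.re‖ ^ 2 = (‖a‖ ^ 2 + ‖b‖ ^ 2 + ‖c‖ ^ 2) / 2 := by
  have hre := congrArg Complex.re hnull
  simp only [sq, Complex.add_re, Complex.mul_re, Complex.zero_re] at hre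
  simp only [norm_vec3_sq, Complex.sq_norm, Complex.normSq_apply]
  linear_combination hre / 2

lemma norm_vec3_re_mul_I_sq_of_isotropic :
    ‖vec3 (a * I).re (b * I).re (c * I).re‖ ^ 2 = (‖a‖ ^ 2 + ‖b‖ ^ 2 + ‖c‖ ^ 2) / 2 := by
  have hre := congrArg Complex.re hnull
  simp only [sq, Complex.add_re, Complex.mul_re, Complex.zero_re] at hre
  simp only [norm_vec3_sq, Complex.mul_I_re, Complex.sq_norm, Complex.normSq_apply]
  linear_combination -hre / 2

lemma inner_vec3_re_re_mul_I_of_isotropic :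
    ⟪vec3 a.re b.re c.re, vec3 (a * I).re (b * I).re (c * I).re⟫ = 0 := by
  have him := congrArg Complex.im hnull
  simp only [sq, Complex.add_im, Complex.mul_im, Complex.zero_im] at him
  simp only [inner_vec3, Complex.mul_I_re]
  linear_combination -him / 2

end Isotropic

lemma weierstrass_isotropic {p q : ℂ} (hpq : p * q = 1) :
    ((1 / 2) * (p - q)) ^ 2 + ((I / 2) * (p + q)) ^ 2 + 1 ^ 2 = 0 := by
  linear_combination (-1 : ℂ) * hpq + (p + q) ^ 2 / 4 * I_sq

lemma weierstrass_norm_sq {p q : ℂ} (hpq : p * q = 1) :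
    ‖(1 / 2) * (p - q)‖ ^ 2 + ‖(I / 2) * (p + q)‖ ^ 2 + ‖(1 : ℂ)‖ ^ 2 = (‖p‖ + ‖q‖) ^ 2 / 2 := by
  have hnorm : ‖p‖ * ‖q‖ = 1 := by rw [← norm_mul, hpq, norm_one]
  have hpar := parallelogram_law_with_norm ℝ p q
  simp only [norm_mul, norm_div, norm_I, Complex.norm_ofNat, norm_one]
  linear_combination hpar / 4 - hnorm

lemma norm_exp_neg_I_mul_add_norm_exp_I_mul (w : ℂ) :
    ‖exp (-I * w)‖ + ‖exp (I * w)‖ = 2 * Real.cosh w.im := by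
  simp only [neg_mul, norm_exp, neg_re, mul_re, I_re, zero_mul, I_im, one_mul, zero_sub, neg_neg,
    Real.cosh_eq]
  ring

lemma linearIndependent_pair_of_inner_eq_zero {E : Type*} [NormedAddCommGroup E]
    [InnerProductSpace ℝ E] {x y : E} (hx : x ≠ 0) (hy : y ≠ 0) (hxy : ⟪x, y⟫ = 0) :
    LinearIndependent ℝ ![x, y] := by
  refine linearIndependent_of_ne_zero_of_inner_eq_zero (fun i => ?_) fun i j hij => ?_
  · fin_cases i <;> assumption
  · fin_cases i <;> fin_cases j <;> simp_all [real_inner_comm]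

theorem stmt1_general (Ω : Set ℂ) (hΩo : IsOpen Ω)
    (h : ℂ → ℂ)
    (G₁ G₂ G₃ : ℂ → ℂ)
    (hG₁ : ∀ z ∈ Ω, HasDerivAt G₁
      ((1/2) * (Complex.exp (-Complex.I * h z) - Complex.exp (Complex.I * h z))) z)
    (hG₂ : ∀ z ∈ Ω, HasDerivAt G₂
      ((Complex.I/2) * (Complex.exp (-Complex.I * h z) + Complex.exp (Complex.I * h z))) z)
    (hG₃ : ∀ z ∈ Ω, HasDerivAt G₃ 1 z)
    (F : ℂ → EuclideanSpace ℝ (Fin 3))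
    (hF : ∀ z ∈ Ω, F z = vec3 (G₁ z).re (G₂ z).re (G₃ z).re) :
    ∀ z ∈ Ω, ∃ Dx Dy : EuclideanSpace ℝ (Fin 3),
      HasDerivAt (fun t : ℝ => F (z + (t : ℂ))) Dx 0 ∧
      HasDerivAt (fun t : ℝ => F (z + (t : ℂ) * Complex.I)) Dy 0 ∧
      ‖Dx‖ ^ 2 = Real.cosh ((h z).im) ^ 2 ∧
      ‖Dy‖ ^ 2 = Real.cosh ((h z).im) ^ 2 ∧
      ⟪Dx, Dy⟫ = 0 ∧
      LinearIndependent ℝ ![Dx, Dy] := by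
  intro z hz
  have hpq : exp (-I * h z) * exp (I * h z) = 1 := by rw [← Complex.exp_add]; simp
  have hnull := weierstrass_isotropic hpq
  have hlen : (‖(1 / 2) * (exp (-I * h z) - exp (I * h z))‖ ^ 2
      + ‖(I / 2) * (exp (-I * h z) + exp (I * h z))‖ ^ 2 + ‖(1 : ℂ)‖ ^ 2) / 2
      = Real.cosh (h z).im ^ 2 := by
    rw [weierstrass_norm_sq hpq, norm_exp_neg_I_mul_add_norm_exp_I_mul]
    ring
  have hDx := hasDerivAt_vec3_re_comp_line hΩo hz (hG₁ z hz) (hG₂ z hz) (hG₃ z hz) hF 1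
  simp only [mul_one] at hDx
  have hDy := hasDerivAt_vec3_re_comp_line hΩo hz (hG₁ z hz) (hG₂ z hz) (hG₃ z hz) hF I
  have hx := (norm_vec3_re_sq_of_isotropic hnull).trans hlen
  have hy := (norm_vec3_re_mul_I_sq_of_isotropic hnull).trans hlen
  have hxy := inner_vec3_re_re_mul_I_of_isotropic hnull
  have hne (v : EuclideanSpace ℝ (Fin 3)) (hv : ‖v‖ ^ 2 = Real.cosh (h z).im ^ 2) : v ≠ 0 := by
    rintro rfl
    rw [norm_zero, eq_comm] at hv
    exact (pow_pos (Real.cosh_pos _) 2).ne' (by simpa using hv)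
  exact ⟨_, _, hDx, hDy, hx, hy, hxy,
    linearIndependent_pair_of_inner_eq_zero (hne _ hx) (hne _ hy) hxy⟩

/-- For the Weierstrass representation `F` with data `g = e^{ih}`, `φ = dz`
(encoded via primitives `G₁, G₂, G₃` vanishing at `z₀`), at every point the partials
`∂ₓF`, `∂_yF` exist, satisfy `|∂ₓF|² = |∂_yF|² = cosh²(v)` and `⟨∂ₓF, ∂_yF⟩ = 0`; in
particular they are linearly independent, so `F` is a conformal immersion. -/
theorem stmt1 (Ω : Set ℂ) (hΩo : IsOpen Ω) (hΩsc : SimplyConnectedSpace Ω)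
    (z₀ : ℂ) (hz₀ : z₀ ∈ Ω) (h : ℂ → ℂ) (hhol : DifferentiableOn ℂ h Ω)
    (G₁ G₂ G₃ : ℂ → ℂ)
    (hG₁ : ∀ z ∈ Ω, HasDerivAt G₁
      ((1/2) * (Complex.exp (-Complex.I * h z) - Complex.exp (Complex.I * h z))) z)
    (hG₂ : ∀ z ∈ Ω, HasDerivAt G₂
      ((Complex.I/2) * (Complex.exp (-Complex.I * h z) + Complex.exp (Complex.I * h z))) z)
    (hG₃ : ∀ z ∈ Ω, HasDerivAt G₃ 1 z)
    (hG₁0 : G₁ z₀ = 0) (hG₂0 : G₂ z₀ = 0) (hG₃0 : G₃ z₀ = 0)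
    (F : ℂ → EuclideanSpace ℝ (Fin 3))
    (hF : ∀ z ∈ Ω, F z = vec3 (G₁ z).re (G₂ z).re (G₃ z).re) :
    ∀ z ∈ Ω, ∃ Dx Dy : EuclideanSpace ℝ (Fin 3),
      HasDerivAt (fun t : ℝ => F (z + (t : ℂ))) Dx 0 ∧
      HasDerivAt (fun t : ℝ => F (z + (t : ℂ) * Complex.I)) Dy 0 ∧
      ‖Dx‖ ^ 2 = Real.cosh ((h z).im) ^ 2 ∧
      ‖Dy‖ ^ 2 = Real.cosh ((h z).im) ^ 2 ∧
      ⟪Dx, Dy⟫ = 0 ∧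
      LinearIndependent ℝ ![Dx, Dy] :=
  stmt1_general Ω hΩo h G₁ G₂ G₃ hG₁ hG₂ hG₃ F hF
end

section
/- Define K_a(z) = −|h_a′(z)|² / cosh⁴(v_a(z)) (the Gauss curvature of the minimal immersion F_a), where h_a′(z) = Σ_{j=1}^{n} 2^{1−j}/((z−b_j)²+a²) and v_a = Im h_a. Then for each k ∈ {1,…,n}, v_a(b_k) = 0 and |K_a(b_k)| = (Σ_{j=1}^{n} 2^{1−j}/((b_k−b_j)²+a²))² → ∞ as a → 0⁺. -/
open Complex Real Set Finset Filter RealInnerProductSpace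

/-- `h_a(z) = Σ_{j<n} (1/(2^j a)) arctan((z - b j)/a)` (indices shifted to start at 0),
using the principal branch of the complex arctangent. -/
noncomputable def hFun (n : ℕ) (b : ℕ → ℝ) (a : ℝ) (z : ℂ) : ℂ :=
  ∑ j ∈ Finset.range n, (1 / ((2 : ℂ) ^ j * (a : ℂ))) * Complex.arctan ((z - (b j : ℂ)) / (a : ℂ))

/-- Left endpoint of the x-range of `Ω_{a,j}`. -/
noncomputable def leftEnd (b : ℕ → ℝ) (j : ℕ) : ℝ :=
  if j = 0 then -(1/2) else (b (j - 1) + b j) / 2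

/-- Right endpoint of the x-range of `Ω_{a,j}`. -/
noncomputable def rightEnd (n : ℕ) (b : ℕ → ℝ) (j : ℕ) : ℝ :=
  if j = n - 1 then 1/2 else (b j + b (j + 1)) / 2

/-- The domain `Ω_{a,j}` (indices shifted to start at 0). -/
def OmegaJ (n : ℕ) (b : ℕ → ℝ) (a : ℝ) (j : ℕ) : Set ℂ :=
  {z : ℂ | leftEnd b j ≤ z.re ∧ z.re ≤ rightEnd n b j ∧
    |z.im| ≤ ((z.re - b j) ^ 2 + a ^ 2) ^ ((3 : ℝ)/4) / 2}

/-- The domain `Ω_a = ⋃_j Ω_{a,j}`. -/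
def OmegaA (n : ℕ) (b : ℕ → ℝ) (a : ℝ) : Set ℂ := ⋃ j ∈ Finset.range n, OmegaJ n b a j

/-- `|K_a(z)| = |h_a'(z)|² / cosh⁴(v_a(z))`, the absolute value of the Gauss curvature
of the minimal immersion `F_a`, where `h_a'(z) = Σ_j 2^{1-j}/((z-b_j)²+a²)` and
`v_a = Im h_a`. -/
noncomputable def KabsFun (n : ℕ) (b : ℕ → ℝ) (a : ℝ) (z : ℂ) : ℝ :=
  ‖∑ j ∈ Finset.range n, 1 / (2 : ℂ) ^ j / ((z - (b j : ℂ)) ^ 2 + (a : ℂ) ^ 2)‖ ^ 2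
    / (Real.cosh ((hFun n b a z).im)) ^ 4

open scoped Topology

section RealAxis

variable (n : ℕ) (b : ℕ → ℝ) (a x : ℝ)

theorem hFun_ofReal :
    hFun n b a x = ((∑ j ∈ range n, 1 / (2 ^ j * a) * Real.arctan ((x - b j) / a) : ℝ) : ℂ) := by
  rw [hFun, ofReal_sum]
  refine sum_congr rfl fun j _ => ?_
  rw [ofReal_mul, ofReal_arctan]
  push_cast
  ring

theorem hFun_ofReal_im : (hFun n b a x).im = 0 := by
  rw [hFun_ofReal, ofReal_im]

theorem KabsFun_ofReal :
    KabsFun n b a x = (∑ j ∈ range n, 1 / (2 : ℝ) ^ j / ((x - b j) ^ 2 + a ^ 2)) ^ 2 := by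
  have hsum : ∑ j ∈ range n, 1 / (2 : ℂ) ^ j / (((x : ℂ) - b j) ^ 2 + (a : ℂ) ^ 2)
      = ((∑ j ∈ range n, 1 / (2 : ℝ) ^ j / ((x - b j) ^ 2 + a ^ 2) : ℝ) : ℂ) := by
    push_cast
    rfl
  rw [KabsFun, hFun_ofReal_im, hsum, norm_real, Real.norm_eq_abs, sq_abs, Real.cosh_zero,
    one_pow, div_one]

end RealAxis

/-- The `j = k` term alone is `2^{-k} a⁻²`, which already blows up. -/
theorem tendsto_sum_div_sq_add_sq_atTop {n k : ℕ} (hk : k < n) (b : ℕ → ℝ) :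
    Tendsto (fun a : ℝ => ∑ j ∈ range n, 1 / (2 : ℝ) ^ j / ((b k - b j) ^ 2 + a ^ 2))
      (𝓝[>] 0) atTop := by
  have hdiag : Tendsto (fun a : ℝ => 1 / (2 : ℝ) ^ k * (a⁻¹) ^ 2) (𝓝[>] 0) atTop :=
    ((tendsto_pow_atTop two_ne_zero).comp tendsto_inv_nhdsGT_zero).const_mul_atTop
      (by positivity)
  refine tendsto_atTop_mono (fun a => ?_) hdiag
  calc 1 / (2 : ℝ) ^ k * (a⁻¹) ^ 2 = 1 / (2 : ℝ) ^ k / ((b k - b k) ^ 2 + a ^ 2) := by ring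
    _ ≤ ∑ j ∈ range n, 1 / (2 : ℝ) ^ j / ((b k - b j) ^ 2 + a ^ 2) :=
        single_le_sum (f := fun j => 1 / (2 : ℝ) ^ j / ((b k - b j) ^ 2 + a ^ 2))
          (fun j _ => by positivity) (mem_range.mpr hk)

theorem stmt4_general (n : ℕ) (b : ℕ → ℝ)
    (k : ℕ) (hk : k < n) :
    (∀ a ∈ Set.Ioo (0 : ℝ) (1/2),
      (hFun n b a ((b k : ℂ))).im = 0 ∧
      KabsFun n b a ((b k : ℂ)) =
        (∑ j ∈ Finset.range n, 1 / (2 : ℝ) ^ j / ((b k - b j) ^ 2 + a ^ 2)) ^ 2) ∧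
    Filter.Tendsto (fun a : ℝ => KabsFun n b a ((b k : ℂ)))
      (nhdsWithin 0 (Set.Ioi 0)) Filter.atTop := by
  refine ⟨fun a _ => ⟨hFun_ofReal_im n b a (b k), KabsFun_ofReal n b a (b k)⟩, ?_⟩
  simp only [KabsFun_ofReal]
  exact (tendsto_pow_atTop two_ne_zero).comp (tendsto_sum_div_sq_add_sq_atTop hk b)

/-- For each `k`, `v_a(b_k) = 0`,
`|K_a(b_k)| = (Σ_j 2^{1-j}/((b_k-b_j)²+a²))²`, and `|K_a(b_k)| → ∞` as `a → 0⁺`. -/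
theorem stmt4 (n : ℕ) (hn : 1 ≤ n) (b : ℕ → ℝ)
    (hb0 : -(1/2) < b 0) (hbn : b (n - 1) < 1/2)
    (hbmono : ∀ j, j + 1 < n → b j < b (j + 1))
    (k : ℕ) (hk : k < n) :
    (∀ a ∈ Set.Ioo (0 : ℝ) (1/2),
      (hFun n b a ((b k : ℂ))).im = 0 ∧
      KabsFun n b a ((b k : ℂ)) =
        (∑ j ∈ Finset.range n, 1 / (2 : ℝ) ^ j / ((b k - b j) ^ 2 + a ^ 2)) ^ 2) ∧
    Filter.Tendsto (fun a : ℝ => KabsFun n b a ((b k : ℂ)))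
      (nhdsWithin 0 (Set.Ioi 0)) Filter.atTop :=
  stmt4_general n b k hk
end

section
/- Define K_a(z) = −|h_a′(z)|² / cosh⁴(v_a(z)), where h_a′(z) = Σ_{j=1}^{n} 2^{1−j}/((z−b_j)²+a²) and v_a = Im h_a. Then for every δ > 0 there exists a constant C = C(δ, n, b_1,…,b_n) < ∞ such that for all a ∈ (0,1/2) and all z = x+iy ∈ Ω_a with |x − b_j| ≥ δ for every j ∈ {1,…,n}, one has |K_a(z)| ≤ C; that is, sup_{a ∈ (0,1/2)} sup{ |K_a(z)| : z ∈ Ω_a, min_j |Re z − b_j| ≥ δ } < ∞. -/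
open Complex Real Set Finset Filter RealInnerProductSpace

/-! Since `cosh ≥ 1`, `|K_a| ≤ |h_a'|²`, and the poles `b_j ± ia` of `h_a'` all lie on the
vertical lines `Re z = b_j`: with `w = z - b_j`, one has `|w² + a²| ≥ (Re w)² ≥ δ²` for every
`a`, so each term of `h_a'` is at most `1/δ²`, uniformly in `a` and in `Im z`. -/

theorem re_sq_le_norm_sq_add_ofReal (w : ℂ) {t : ℝ} (ht : 0 ≤ t) : w.re ^ 2 ≤ ‖w ^ 2 + t‖ := by
  have hnormSq : ‖w ^ 2 + t‖ ^ 2 = (w.re ^ 2 - w.im ^ 2 + t) ^ 2 + (2 * w.re * w.im) ^ 2 := by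
    rw [Complex.sq_norm, Complex.normSq_apply]
    simp only [add_re, add_im, ofReal_re, ofReal_im, sq, mul_re, mul_im]
    ring
  -- `‖w² + t‖² - (Re w)⁴ = ((Im w)² - t)² + 2 (Re w)² ((Im w)² + t)`
  have hfourth : (w.re ^ 2) ^ 2 ≤ ‖w ^ 2 + t‖ ^ 2 := by
    rw [hnormSq]
    nlinarith [sq_nonneg (w.im ^ 2 - t), mul_nonneg (sq_nonneg w.re)
      (add_nonneg (sq_nonneg w.im) ht)]
  exact (pow_le_pow_iff_left₀ (sq_nonneg _) (norm_nonneg _) two_ne_zero).mp hfourth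

theorem norm_sum_inv_two_pow_div_le {n : ℕ} {b : ℕ → ℝ} {δ : ℝ} (hδ : 0 < δ) (a : ℝ) {z : ℂ}
    (hz : ∀ j < n, δ ≤ |z.re - b j|) :
    ‖∑ j ∈ range n, 1 / (2 : ℂ) ^ j / ((z - b j) ^ 2 + (a : ℂ) ^ 2)‖ ≤ n / δ ^ 2 := by
  have hterm : ∀ j ∈ range n, ‖1 / (2 : ℂ) ^ j / ((z - b j) ^ 2 + (a : ℂ) ^ 2)‖ ≤ 1 / δ ^ 2 := by
    intro j hj
    have hpole : δ ^ 2 ≤ ‖(z - b j) ^ 2 + (a : ℂ) ^ 2‖ := calc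
      δ ^ 2 ≤ (z.re - b j) ^ 2 := by
        simpa only [sq_abs] using pow_le_pow_left₀ hδ.le (hz j (mem_range.mp hj)) 2
      _ ≤ ‖(z - b j) ^ 2 + (a : ℂ) ^ 2‖ := by
        simpa only [sub_re, ofReal_re, ofReal_pow] using
          re_sq_le_norm_sq_add_ofReal (z - b j) (sq_nonneg a)
    rw [norm_div, norm_div, norm_one, norm_pow, Complex.norm_two]
    calc 1 / 2 ^ j / ‖(z - b j) ^ 2 + (a : ℂ) ^ 2‖
        ≤ 1 / ‖(z - b j) ^ 2 + (a : ℂ) ^ 2‖ := by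
          gcongr
          exact div_le_self zero_le_one (one_le_pow₀ one_le_two)
      _ ≤ 1 / δ ^ 2 := by gcongr
  calc ‖∑ j ∈ range n, 1 / (2 : ℂ) ^ j / ((z - b j) ^ 2 + (a : ℂ) ^ 2)‖
      ≤ ∑ j ∈ range n, ‖1 / (2 : ℂ) ^ j / ((z - b j) ^ 2 + (a : ℂ) ^ 2)‖ := norm_sum_le _ _
    _ ≤ ∑ _j ∈ range n, 1 / δ ^ 2 := sum_le_sum hterm
    _ = n / δ ^ 2 := by rw [sum_const, card_range, nsmul_eq_mul, mul_one_div]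

theorem KabsFun_le_sq_norm (n : ℕ) (b : ℕ → ℝ) (a : ℝ) (z : ℂ) :
    KabsFun n b a z ≤ ‖∑ j ∈ range n, 1 / (2 : ℂ) ^ j / ((z - b j) ^ 2 + (a : ℂ) ^ 2)‖ ^ 2 :=
  div_le_self (sq_nonneg _) (one_le_pow₀ (Real.one_le_cosh _))

theorem stmt5_general (n : ℕ) (b : ℕ → ℝ)
    (δ : ℝ) (hδ : 0 < δ) :
    ∃ C : ℝ, ∀ a ∈ Set.Ioo (0 : ℝ) (1/2), ∀ z ∈ OmegaA n b a,
      (∀ j < n, δ ≤ |z.re - b j|) → KabsFun n b a z ≤ C :=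
  ⟨(n / δ ^ 2) ^ 2, fun a _ z _ hz => (KabsFun_le_sq_norm n b a z).trans <|
    pow_le_pow_left₀ (norm_nonneg _) (norm_sum_inv_two_pow_div_le hδ a hz) 2⟩

/-- For every `δ > 0` there is `C < ∞` (depending only on `δ, n, b`) such
that for all `a ∈ (0,1/2)` and all `z ∈ Ω_a` with `|Re z - b_j| ≥ δ` for every `j`,
`|K_a(z)| ≤ C`. -/
theorem stmt5 (n : ℕ) (hn : 1 ≤ n) (b : ℕ → ℝ)
    (hb0 : -(1/2) < b 0) (hbn : b (n - 1) < 1/2)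
    (hbmono : ∀ j, j + 1 < n → b j < b (j + 1))
    (δ : ℝ) (hδ : 0 < δ) :
    ∃ C : ℝ, ∀ a ∈ Set.Ioo (0 : ℝ) (1/2), ∀ z ∈ OmegaA n b a,
      (∀ j < n, δ ≤ |z.re - b j|) → KabsFun n b a z ≤ C :=
  stmt5_general n b δ hδ
end

section
/- For every a ∈ (0,1/2), every k ∈ {1,…,n}, and every (x,y) ∈ Ω_{a,k}, one has |∂_y u_a(x,y)| ≤ 4 · Σ_{j=1}^{n} 2^{1−j} · |x−b_j| · |y| / ((x−b_j)² + a²)², where u_a = Re h_a. -/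
open Complex Real Set Finset Filter RealInnerProductSpace

/-!
Writing `D_j = a² + (z - b_j)²`, the derivative of `h_a` is `Σ_j 2^{-j} D_j⁻¹`, so
`∂_y u_a = -Im h_a' = Σ_j 2^{-j} · 2 (x - b_j) y / |D_j|²`. On `Ω_{a,k}` the point `b_k` is the
nearest of the `b_j` and `|x - b_k| ≤ 1`, so with `t = (x - b_k)² + a² ≤ 5/4` the defining bound
`|y| ≤ t^{3/4}/2` gives `y² ≤ t √t / 4 ≤ (9/32) ((x - b_j)² + a²)` for every `j`. Hence
`Re D_j ≥ (23/32) ((x - b_j)² + a²)`, which keeps `(z - b_j)/a` off the branch cuts of `arctan`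
and bounds `|D_j|²` below by `((x - b_j)² + a²)² / 2`.
-/

namespace Complex

lemma one_add_mul_I_div_one_sub_mul_I_mem_slitPlane {z : ℂ} (hz : 1 + z ^ 2 ∈ slitPlane) :
    (1 + z * I) / (1 - z * I) ∈ slitPlane := by
  have hden : 1 - z * I ≠ 0 := fun h ↦ slitPlane_ne_zero hz <| by
    linear_combination (1 + z * I) * h + z ^ 2 * I_sq
  have hN : 0 < normSq (1 - z * I) := normSq_pos.2 hden
  rw [mem_slitPlane_iff] at hz ⊢
  simp only [div_re, div_im, add_re, add_im, sub_re, sub_im, mul_re, mul_im, one_re, one_im,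
    I_re, I_im, pow_two] at hz ⊢
  rcases eq_or_ne z.re 0 with hre | hre
  · left
    rw [← add_div]
    refine div_pos ?_ hN
    simp only [hre] at hz ⊢
    rcases hz with hz | hz
    · nlinarith
    · norm_num at hz
  · right
    rw [← sub_div]
    refine div_ne_zero ?_ hN.ne'
    ring_nf
    exact mul_ne_zero hre two_ne_zero

theorem hasDerivAt_arctan {z : ℂ} (hz : 1 + z ^ 2 ∈ slitPlane) :
    HasDerivAt arctan (1 + z ^ 2)⁻¹ z := by
  have hfac : 1 + z ^ 2 = (1 + z * I) * (1 - z * I) := by linear_combination z ^ 2 * I_sq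
  obtain ⟨hplus, hminus⟩ := mul_ne_zero_iff.1 (hfac ▸ slitPlane_ne_zero hz)
  have hquot : HasDerivAt (fun w : ℂ ↦ (1 + w * I) / (1 - w * I)) (2 * I / (1 - z * I) ^ 2) z := by
    refine ((((hasDerivAt_id' z).mul_const I).const_add 1).div
      (((hasDerivAt_id' z).mul_const I).const_sub 1) hminus).congr_deriv ?_
    field_simp
    ring
  refine (((hasDerivAt_log (one_add_mul_I_div_one_sub_mul_I_mem_slitPlane hz)).comp z
    hquot).const_mul (-I / 2)).congr_deriv ?_
  rw [hfac]
  field_simp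
  rw [I_sq]
  ring

end Complex

lemma hasDerivAt_arctan_sub_div {a : ℝ} (ha : a ≠ 0) {c z : ℂ}
    (hz : 0 < ((a : ℂ) ^ 2 + (z - c) ^ 2).re) :
    HasDerivAt (fun ζ : ℂ ↦ Complex.arctan ((ζ - c) / a)) (a / (a ^ 2 + (z - c) ^ 2)) z := by
  have haC : (a : ℂ) ≠ 0 := ofReal_ne_zero.2 ha
  have hscale : 1 + ((z - c) / a) ^ 2 = ((a : ℂ) ^ 2 + (z - c) ^ 2) / (a ^ 2 : ℝ) := by
    push_cast; field_simp
  have hslit : 1 + ((z - c) / a) ^ 2 ∈ slitPlane := by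
    rw [hscale, mem_slitPlane_iff, div_ofReal_re]
    left; positivity
  refine ((Complex.hasDerivAt_arctan hslit).comp z
    (((hasDerivAt_id' z).sub_const c).div_const (a : ℂ))).congr_deriv ?_
  rw [hscale]
  push_cast
  field_simp

lemma hasDerivAt_hFun {n : ℕ} {b : ℕ → ℝ} {a : ℝ} (ha : a ≠ 0) {z : ℂ}
    (hz : ∀ j < n, 0 < ((a : ℂ) ^ 2 + (z - b j) ^ 2).re) :
    HasDerivAt (hFun n b a)
      (∑ j ∈ range n, (((2 : ℝ) ^ j)⁻¹ : ℝ) * ((a : ℂ) ^ 2 + (z - b j) ^ 2)⁻¹) z := by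
  unfold hFun
  refine HasDerivAt.fun_sum fun j hj ↦ ?_
  refine ((hasDerivAt_arctan_sub_div ha (hz j (mem_range.1 hj))).const_mul _).congr_deriv ?_
  have haC : (a : ℂ) ≠ 0 := ofReal_ne_zero.2 ha
  push_cast
  field_simp

lemma HasDerivAt.hasDerivAt_re_comp_vertical {f : ℂ → ℂ} {f' z : ℂ} (hf : HasDerivAt f f' z) :
    HasDerivAt (fun y : ℝ ↦ (f (z.re + y * I)).re) (-f'.im) z.im := by
  have hline : HasDerivAt (fun y : ℝ ↦ (z.re : ℂ) + y * I) I z.im := by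
    simpa using (ofRealCLM.hasDerivAt.mul_const I).const_add (z.re : ℂ)
  rw [← re_add_im z] at hf
  have h := reCLM.hasFDerivAt.comp_hasDerivAt z.im (hf.comp z.im hline)
  rw [reCLM_apply, mul_I_re] at h
  exact h

section SquareSum

variable {a c : ℝ} {z : ℂ}

lemma re_sq_add_sub_sq : ((a : ℂ) ^ 2 + (z - c) ^ 2).re = (z.re - c) ^ 2 + a ^ 2 - z.im ^ 2 := by
  simp only [add_re, sub_re, sub_im, ofReal_re, ofReal_im, pow_two, mul_re]
  ring

lemma im_sq_add_sub_sq : ((a : ℂ) ^ 2 + (z - c) ^ 2).im = 2 * (z.re - c) * z.im := by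
  simp only [add_im, sub_re, sub_im, ofReal_re, ofReal_im, pow_two, mul_im]
  ring

variable (ha : a ≠ 0) (hz : 32 * z.im ^ 2 ≤ 9 * ((z.re - c) ^ 2 + a ^ 2))
include ha hz

lemma re_sq_add_sub_sq_pos : 0 < ((a : ℂ) ^ 2 + (z - c) ^ 2).re := by
  rw [re_sq_add_sub_sq]
  have : 0 < (z.re - c) ^ 2 + a ^ 2 := by positivity
  linarith

/-- `9/32 < 1 - 1/√2` is what makes `normSq (a² + (z - c)²)` at least half of
`((z.re - c)² + a²)²`. -/
lemma abs_im_inv_sq_add_sub_sq_le :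
    |((a : ℂ) ^ 2 + (z - c) ^ 2)⁻¹.im| ≤
      4 * (|z.re - c| * |z.im| / ((z.re - c) ^ 2 + a ^ 2) ^ 2) := by
  set S := (z.re - c) ^ 2 + a ^ 2
  have hS : 0 < S := by positivity
  have hnormSq : S ^ 2 / 2 ≤ normSq ((a : ℂ) ^ 2 + (z - c) ^ 2) := by
    rw [normSq_apply, re_sq_add_sub_sq]
    nlinarith [sq_nonneg (((a : ℂ) ^ 2 + (z - c) ^ 2).im)]
  have hN : 0 < normSq ((a : ℂ) ^ 2 + (z - c) ^ 2) := lt_of_lt_of_le (by positivity) hnormSq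
  rw [inv_im, im_sq_add_sub_sq, abs_div, abs_neg, abs_of_pos hN, abs_mul, abs_mul, abs_two]
  calc 2 * |z.re - c| * |z.im| / normSq ((a : ℂ) ^ 2 + (z - c) ^ 2)
      ≤ 2 * |z.re - c| * |z.im| / (S ^ 2 / 2) := by gcongr
    _ = 4 * (|z.re - c| * |z.im| / S ^ 2) := by field_simp; ring

end SquareSum

lemma sq_le_of_abs_le_rpow_three_quarters {t y : ℝ} (ht : 0 ≤ t) (ht' : t ≤ (9 / 8) ^ 2)
    (hy : |y| ≤ t ^ (3 / 4 : ℝ) / 2) : 32 * y ^ 2 ≤ 9 * t := by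
  have hrpow : (t ^ (3 / 4 : ℝ)) ^ 2 = t * √t := by
    rw [← Real.rpow_mul_natCast ht, Real.sqrt_eq_rpow, ← Real.rpow_one_add' ht (by norm_num)]
    norm_num
  have hsqrt : √t ≤ 9 / 8 := Real.sqrt_le_iff.2 ⟨by norm_num, ht'⟩
  have hy2 : y ^ 2 ≤ (t ^ (3 / 4 : ℝ)) ^ 2 / 4 := by
    rw [← sq_abs]
    nlinarith [abs_nonneg y]
  nlinarith [mul_le_mul_of_nonneg_left hsqrt ht]

namespace OmegaJ

variable {n : ℕ} {b : ℕ → ℝ} {a : ℝ} {k : ℕ} {z : ℂ}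

lemma sq_re_sub_le (hb : MonotoneOn b (Set.Iio n)) (hk : k < n) (hz : z ∈ OmegaJ n b a k)
    {j : ℕ} (hj : j < n) :
    (z.re - b k) ^ 2 ≤ (z.re - b j) ^ 2 := by
  obtain ⟨hl, hr, -⟩ := hz
  rcases lt_trichotomy j k with hjk | rfl | hkj
  · rw [leftEnd, if_neg (by omega)] at hl
    have hj' : b j ≤ b (k - 1) := hb (by simp; omega) (by simp; omega) (by omega)
    have hk' : b (k - 1) ≤ b k := hb (by simp; omega) (by simp; omega) (by omega)
    nlinarith [mul_nonneg (sub_nonneg.2 (hj'.trans hk')) (by linarith : 0 ≤ 2 * z.re - b j - b k)]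
  · exact le_rfl
  · rw [rightEnd, if_neg (by omega)] at hr
    have hj' : b (k + 1) ≤ b j := hb (by simp; omega) (by simp; omega) (by omega)
    have hk' : b k ≤ b (k + 1) := hb (by simp; omega) (by simp; omega) (by omega)
    nlinarith [mul_nonneg (sub_nonneg.2 (hk'.trans hj')) (by linarith : 0 ≤ b j + b k - 2 * z.re)]

lemma abs_re_sub_le_one (hb0 : -(1 / 2) < b 0) (hbn : b (n - 1) < 1 / 2)
    (hb : MonotoneOn b (Set.Iio n)) (hk : k < n) (hz : z ∈ OmegaJ n b a k) :
    |z.re - b k| ≤ 1 := by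
  have hmem : ∀ j < n, -(1 / 2) < b j ∧ b j < 1 / 2 := fun j hj ↦
    ⟨hb0.trans_le (hb (by simp; omega) (by simpa using hj) (by omega)),
      (hb (by simpa using hj) (by simp; omega) (by omega)).trans_lt hbn⟩
  obtain ⟨hl, hr, -⟩ := hz
  have hx_ge : -(1 / 2) ≤ z.re := by
    refine le_trans ?_ hl
    unfold leftEnd
    split_ifs
    · exact le_rfl
    · linarith [hmem (k - 1) (by omega), hmem k hk]
  have hx_le : z.re ≤ 1 / 2 := by
    refine hr.trans ?_
    unfold rightEnd
    split_ifs
    · exact le_rfl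
    · linarith [hmem (k + 1) (by omega), hmem k hk]
  rw [abs_le]
  constructor <;> linarith [hmem k hk]

lemma im_sq_le (hb0 : -(1 / 2) < b 0) (hbn : b (n - 1) < 1 / 2) (hb : MonotoneOn b (Set.Iio n))
    (ha : a ∈ Ioo (0 : ℝ) (1 / 2)) (hk : k < n) (hz : z ∈ OmegaJ n b a k) {j : ℕ} (hj : j < n) :
    32 * z.im ^ 2 ≤ 9 * ((z.re - b j) ^ 2 + a ^ 2) := by
  have hnear := sq_re_sub_le hb hk hz hj
  have hdist := abs_re_sub_le_one hb0 hbn hb hk hz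
  have ht : (z.re - b k) ^ 2 + a ^ 2 ≤ (9 / 8) ^ 2 := by
    nlinarith [sq_abs (z.re - b k), abs_nonneg (z.re - b k), ha.1, ha.2]
  have := sq_le_of_abs_le_rpow_three_quarters (by positivity) ht hz.2.2
  linarith

end OmegaJ

theorem stmt9_general (n : ℕ) (b : ℕ → ℝ)
    (hb0 : -(1/2) < b 0) (hbn : b (n - 1) < 1/2)
    (hbmono : ∀ j, j + 1 < n → b j < b (j + 1))
    (a : ℝ) (ha : a ∈ Set.Ioo (0 : ℝ) (1/2))
    (k : ℕ) (hk : k < n) (z : ℂ) (hz : z ∈ OmegaJ n b a k) :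
    ∃ d : ℝ,
      HasDerivAt (fun y : ℝ => (hFun n b a ((z.re : ℂ) + (y : ℂ) * Complex.I)).re) d z.im ∧
      |d| ≤ 4 * ∑ j ∈ Finset.range n,
        1 / (2 : ℝ) ^ j * (|z.re - b j| * |z.im| / ((z.re - b j) ^ 2 + a ^ 2) ^ 2) := by
  have hb : MonotoneOn b (Set.Iio n) :=
    (strictMonoOn_of_lt_succ ordConnected_Iio fun j _ _ hj ↦ hbmono j hj).monotoneOn
  have ha0 : a ≠ 0 := ha.1.ne'
  have hsmall : ∀ j < n, 32 * z.im ^ 2 ≤ 9 * ((z.re - b j) ^ 2 + a ^ 2) :=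
    fun j ↦ OmegaJ.im_sq_le hb0 hbn hb ha hk hz
  refine ⟨_, (hasDerivAt_hFun ha0 fun j hj ↦
    re_sq_add_sub_sq_pos ha0 (hsmall j hj)).hasDerivAt_re_comp_vertical, ?_⟩
  rw [im_sum, abs_neg, mul_sum]
  refine (abs_sum_le_sum_abs _ _).trans (sum_le_sum fun j hj ↦ ?_)
  rw [im_ofReal_mul, abs_mul, abs_of_pos (by positivity), one_div, mul_left_comm]
  gcongr
  exact abs_im_inv_sq_add_sub_sq_le ha0 (hsmall j (mem_range.1 hj))

/-- On `Ω_{a,k}`, the partial derivative `∂_y u_a(x,y)` (where `u_a = Re h_a`)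
satisfies `|∂_y u_a(x,y)| ≤ 4 Σ_j 2^{1-j} |x-b_j||y| / ((x-b_j)²+a²)²`. -/
theorem stmt9 (n : ℕ) (hn : 1 ≤ n) (b : ℕ → ℝ)
    (hb0 : -(1/2) < b 0) (hbn : b (n - 1) < 1/2)
    (hbmono : ∀ j, j + 1 < n → b j < b (j + 1))
    (a : ℝ) (ha : a ∈ Set.Ioo (0 : ℝ) (1/2))
    (k : ℕ) (hk : k < n) (z : ℂ) (hz : z ∈ OmegaJ n b a k) :
    ∃ d : ℝ,
      HasDerivAt (fun y : ℝ => (hFun n b a ((z.re : ℂ) + (y : ℂ) * Complex.I)).re) d z.im ∧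
      |d| ≤ 4 * ∑ j ∈ Finset.range n,
        1 / (2 : ℝ) ^ j * (|z.re - b j| * |z.im| / ((z.re - b j) ^ 2 + a ^ 2) ^ 2) :=
  stmt9_general n b hb0 hbn hbmono a ha k hk z hz
end

section
/- For every a ∈ (0,1/2), every k ∈ {1,…,n}, and every (x,y) ∈ Ω_{a,k}, one has |u_a(x,y) − u_a(x,0)| < 1, where u_a = Re h_a. In particular, max over |y| ≤ ((x−b_k)²+a²)^{3/4}/2 of |u_a(x,y) − u_a(x,0)| ≤ (1/2) Σ_{j=1}^{n} 2^{1−j} < 1. -/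
open Complex Real Set Finset Filter RealInnerProductSpace

/-!
Since `Re arctan (p + q I) = arg ((1 - p² - q²) + 2 p I) / 2`, the vertical change
`Re arctan (p + q I) - arctan p` is half the difference of two real arctangents with the same
denominator `2 p`. The subtraction formula together with `arctan t ≤ t` bounds it by
`2 |p| q² / (1 + p²)²`, which is quadratic in `q`. On `Ω_{a,k}` the centre `b_k` is the nearest
one to `x`, so the height bound `|y| ≤ ((x - b_k)² + a²)^{3/4} / 2` gives, for every `j`,
`q⁴ ≤ a² (1 + p²)³ / 16` with `p = (x - b_j) / a`, `q = y / a`; hence the `j`-th term of `u_a`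
moves by at most `2^{-j} / 2`, and the geometric series sums to less than `1`.
-/

namespace Real

lemma arctan_le_self {x : ℝ} (hx : 0 ≤ x) : arctan x ≤ x := by
  simpa only [tan_arctan] using le_tan (arctan_nonneg.2 hx) (arctan_lt_pi_div_two x)

lemma arctan_sub_arctan_le {s t : ℝ} (hts : t ≤ s) (hst : -1 < s * t) :
    arctan s - arctan t ≤ (s - t) / (1 + s * t) := by
  calc arctan s - arctan t = arctan ((s - t) / (1 + s * t)) := by
        rw [sub_eq_add_neg, ← arctan_neg, arctan_add (by linarith)]
        ring_nf
    _ ≤ (s - t) / (1 + s * t) := arctan_le_self (div_nonneg (by linarith) (by linarith))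

end Real

namespace Complex

lemma arg_add_mul_I_of_pos {u v : ℝ} (hv : 0 < v) :
    arg (u + v * I) = π / 2 - Real.arctan (u / v) := by
  have hw : (u / v) / √(1 + (u / v) ^ 2) = u / ‖(u + v * I : ℂ)‖ := by
    have : √(1 + (u / v) ^ 2) = √(u ^ 2 + v ^ 2) / v := by
      rw [show 1 + (u / v) ^ 2 = (u ^ 2 + v ^ 2) / v ^ 2 by field_simp; ring,
        sqrt_div' _ (sq_nonneg v), sqrt_sq hv.le]
    rw [norm_add_mul_I, this, div_div_div_cancel_right₀ hv.ne']
  rw [arg_of_im_pos (by simpa using hv), Real.arctan_eq_arcsin, hw,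
    Real.arccos_eq_pi_div_two_sub_arcsin]
  simp

lemma arg_add_mul_I_of_neg {u v : ℝ} (hv : v < 0) :
    arg (u + v * I) = -(π / 2) - Real.arctan (u / v) := by
  have hw : (u / v) / √(1 + (u / v) ^ 2) = -(u / ‖(u + v * I : ℂ)‖) := by
    have : √(1 + (u / v) ^ 2) = √(u ^ 2 + v ^ 2) / -v := by
      rw [show 1 + (u / v) ^ 2 = (u ^ 2 + v ^ 2) / (-v) ^ 2 by field_simp [hv.ne]; ring,
        sqrt_div' _ (sq_nonneg _), sqrt_sq (by linarith)]
    rw [norm_add_mul_I, this, ← neg_div_neg_eq u v, div_div_div_cancel_right₀ (by linarith),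
      neg_div]
  rw [arg_of_im_neg (by simpa using hv), Real.arctan_eq_arcsin, hw, Real.arcsin_neg,
    Real.arccos_eq_pi_div_two_sub_arcsin]
  simp only [add_re, ofReal_re, mul_re, I_re, mul_zero, ofReal_im, I_im, mul_one, sub_self,
    add_zero, neg_sub, sub_neg_eq_add]
  ring

lemma arg_add_mul_I_sub_arg_add_mul_I {u u' v : ℝ} (hv : v ≠ 0) :
    arg (u + v * I) - arg (u' + v * I) = Real.arctan (u' / v) - Real.arctan (u / v) := by
  rcases hv.lt_or_gt with hv | hv
  · rw [arg_add_mul_I_of_neg hv, arg_add_mul_I_of_neg hv]; ring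
  · rw [arg_add_mul_I_of_pos hv, arg_add_mul_I_of_pos hv]; ring

/-- The real part of `arctan z` is half the argument of `(1 + z I) * conj (1 - z I)`. -/
lemma re_arctan {z : ℂ} (hz : z ≠ -I) :
    (arctan z).re = arg ((1 - normSq z : ℝ) + (2 * z.re : ℝ) * I) / 2 := by
  have hne : 1 - z * I ≠ 0 := by
    contrapose! hz
    linear_combination I * hz + z * I_sq
  have hquot : (1 + z * I) / (1 - z * I)
      = ((normSq (1 - z * I))⁻¹ : ℝ) * ((1 - normSq z : ℝ) + (2 * z.re : ℝ) * I) := by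
    rw [div_eq_mul_inv, inv_def, ← mul_assoc, mul_comm]
    congr 1
    apply Complex.ext <;> simp [normSq_apply] <;> ring
  have hre (w : ℂ) : (-I / 2 * w).re = w.im / 2 := by simp; ring
  rw [arctan, hquot, hre, log_im, arg_real_mul _ (inv_pos.2 (normSq_pos.2 hne))]

lemma re_arctan_add_mul_I_sub_arctan {p : ℝ} (hp : p ≠ 0) (q : ℝ) :
    (arctan (p + q * I)).re - Real.arctan p
      = (Real.arctan ((1 - p ^ 2) / (2 * p))
          - Real.arctan ((1 - p ^ 2 - q ^ 2) / (2 * p))) / 2 := by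
  have hpq : (p + q * I : ℂ) ≠ -I := fun h => hp (by simpa using congrArg re h)
  have hp' : (p : ℂ) ≠ -I := fun h => hp (by simpa using congrArg re h)
  have hreal : Real.arctan p = (arctan p).re := by rw [← ofReal_arctan, ofReal_re]
  rw [hreal, re_arctan hpq, re_arctan hp', ← sub_div, normSq_add_mul_I, normSq_ofReal]
  simp only [add_re, ofReal_re, mul_re, I_re, mul_zero, ofReal_im, I_im, mul_one, sub_self,
    add_zero]
  rw [arg_add_mul_I_sub_arg_add_mul_I (by positivity)]
  ring_nf

end Complex

lemma abs_arctan_one_sub_sq_div_sub_le {P Q : ℝ} (hP : 0 < P) (hQ : 0 ≤ Q)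
    (h : (1 - P ^ 2) * Q ≤ (1 + P ^ 2) ^ 2 / 2) :
    |Real.arctan ((1 - P ^ 2) / (2 * P)) - Real.arctan ((1 - P ^ 2 - Q) / (2 * P))|
      ≤ 4 * P * Q / (1 + P ^ 2) ^ 2 := by
  set s := (1 - P ^ 2) / (2 * P)
  set t := (1 - P ^ 2 - Q) / (2 * P)
  have hts : t ≤ s := div_le_div_of_nonneg_right (by linarith) (by positivity)
  have hst : 1 + s * t = ((1 + P ^ 2) ^ 2 - (1 - P ^ 2) * Q) / (4 * P ^ 2) := by
    simp only [s, t]; field_simp; ring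
  have hden : 0 < (1 + P ^ 2) ^ 2 - (1 - P ^ 2) * Q := by nlinarith
  rw [abs_of_nonneg (sub_nonneg.2 (Real.arctan_le_arctan_iff.2 hts))]
  calc Real.arctan s - Real.arctan t ≤ (s - t) / (1 + s * t) :=
        Real.arctan_sub_arctan_le hts (by linarith [show 0 < 1 + s * t by rw [hst]; positivity])
    _ = 2 * P * Q / ((1 + P ^ 2) ^ 2 - (1 - P ^ 2) * Q) := by
        rw [hst]; simp only [s, t]; field_simp; ring
    _ ≤ 4 * P * Q / (1 + P ^ 2) ^ 2 := by
        rw [div_le_div_iff₀ hden (by positivity)]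
        nlinarith [mul_nonneg hP.le hQ]

lemma abs_re_arctan_add_mul_I_sub_arctan_le {p q : ℝ}
    (h : (1 - p ^ 2) * q ^ 2 ≤ (1 + p ^ 2) ^ 2 / 2) :
    |(Complex.arctan (p + q * I)).re - Real.arctan p| ≤ 2 * |p| * q ^ 2 / (1 + p ^ 2) ^ 2 := by
  rcases eq_or_ne p 0 with rfl | hp
  · have hq : (q * I : ℂ) ≠ -I := fun h' => by
      have : q = -1 := by simpa using congrArg im h'
      nlinarith
    have h1q : 0 ≤ 1 - normSq (q * I) := by rw [normSq_mul, normSq_ofReal, normSq_I]; nlinarith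
    rw [ofReal_zero, zero_add, re_arctan hq, show ((q : ℂ) * I).re = 0 by simp, mul_zero,
      ofReal_zero, zero_mul, add_zero, arg_ofReal_of_nonneg h1q]
    simp
  have hodd : |Real.arctan ((1 - p ^ 2) / (2 * p)) - Real.arctan ((1 - p ^ 2 - q ^ 2) / (2 * p))|
      = |Real.arctan ((1 - p ^ 2) / (2 * |p|))
          - Real.arctan ((1 - p ^ 2 - q ^ 2) / (2 * |p|))| := by
    rcases abs_choice p with hpos | hneg
    · rw [hpos]
    · rw [hneg, ← abs_neg, mul_neg, div_neg, div_neg, Real.arctan_neg, Real.arctan_neg]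
      ring_nf
  have key := abs_arctan_one_sub_sq_div_sub_le (abs_pos.2 hp) (sq_nonneg q) (by rwa [sq_abs])
  rw [sq_abs] at key
  rw [Complex.re_arctan_add_mul_I_sub_arctan hp, abs_div, abs_two, hodd, div_le_iff₀ two_pos]
  exact key.trans_eq (by ring)

lemma abs_re_arctan_add_mul_I_sub_arctan_le_half {a p q : ℝ} (ha0 : 0 < a) (ha : a < 1 / 2)
    (hq : q ^ 4 ≤ a ^ 2 * (1 + p ^ 2) ^ 3 / 16) :
    |(Complex.arctan (p + q * I)).re - Real.arctan p| ≤ a / 2 := by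
  have hcond : (1 - p ^ 2) * q ^ 2 ≤ (1 + p ^ 2) ^ 2 / 2 := by
    rcases le_or_gt 1 (p ^ 2) with hp | hp
    · nlinarith [sq_nonneg q]
    · have hcube : (1 + p ^ 2) ^ 3 < 2 ^ 3 :=
        pow_lt_pow_left₀ (by linarith) (by positivity) three_ne_zero
      have hq2 : q ^ 2 < 1 / 2 := by nlinarith [sq_nonneg (q ^ 2)]
      nlinarith [sq_nonneg q, sq_nonneg p]
  have hsq : (4 * |p| * q ^ 2) ^ 2 ≤ (a * (1 + p ^ 2) ^ 2) ^ 2 :=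
    calc (4 * |p| * q ^ 2) ^ 2 = 16 * p ^ 2 * q ^ 4 := by rw [mul_pow, mul_pow, sq_abs]; ring
      _ ≤ 16 * p ^ 2 * (a ^ 2 * (1 + p ^ 2) ^ 3 / 16) := by gcongr
      _ ≤ (a * (1 + p ^ 2) ^ 2) ^ 2 := by
          nlinarith [sq_nonneg a, pow_pos (by positivity : (0 : ℝ) < 1 + p ^ 2) 3]
  have hlin := (pow_le_pow_iff_left₀ (by positivity) (by positivity) two_ne_zero).1 hsq
  refine (abs_re_arctan_add_mul_I_sub_arctan_le hcond).trans ?_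
  rw [div_le_iff₀ (by positivity)]
  linarith

lemma re_hFun_sub_re_hFun_re (n : ℕ) (b : ℕ → ℝ) (a : ℝ) (z : ℂ) :
    (hFun n b a z).re - (hFun n b a z.re).re
      = ∑ j ∈ Finset.range n, ((2 : ℝ) ^ j * a)⁻¹ *
          ((Complex.arctan (((z.re - b j) / a : ℝ) + (z.im / a : ℝ) * I)).re
            - Real.arctan ((z.re - b j) / a)) := by
  simp only [hFun, re_sum, ← Finset.sum_sub_distrib]
  refine Finset.sum_congr rfl fun j _ => ?_
  have hcoef : 1 / ((2 : ℂ) ^ j * a) = (((2 : ℝ) ^ j * a)⁻¹ : ℝ) := by push_cast; ring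
  have hz : (z - b j) / a = (((z.re - b j) / a : ℝ) + (z.im / a : ℝ) * I : ℂ) := by
    conv_lhs => rw [← re_add_im z]
    push_cast; ring
  have hx : ((z.re : ℂ) - b j) / a = (((z.re - b j) / a : ℝ) : ℂ) := by push_cast; rfl
  rw [hcoef, hz, hx, re_ofReal_mul, re_ofReal_mul, ← ofReal_arctan, ofReal_re, mul_sub]

section Omega

variable {n : ℕ} {b : ℕ → ℝ} {a : ℝ} {k : ℕ} {z : ℂ}

lemma im_pow_four_le_of_mem_OmegaJ (hz : z ∈ OmegaJ n b a k) :
    z.im ^ 4 ≤ ((z.re - b k) ^ 2 + a ^ 2) ^ 3 / 16 := by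
  have hD : 0 ≤ (z.re - b k) ^ 2 + a ^ 2 := by positivity
  calc z.im ^ 4 = |z.im| ^ 4 := (Even.pow_abs ⟨2, rfl⟩ _).symm
    _ ≤ (((z.re - b k) ^ 2 + a ^ 2) ^ ((3 : ℝ) / 4) / 2) ^ 4 := by gcongr; exact hz.2.2
    _ = ((z.re - b k) ^ 2 + a ^ 2) ^ 3 / 16 := by
        rw [div_pow, ← Real.rpow_mul_natCast hD]; norm_num

lemma sq_re_sub_le_of_mem_OmegaJ (hb : ∀ j, j + 1 < n → b j < b (j + 1)) (hk : k < n)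
    (hz : z ∈ OmegaJ n b a k) {j : ℕ} (hj : j < n) : (z.re - b k) ^ 2 ≤ (z.re - b j) ^ 2 := by
  have hmono : MonotoneOn b (Set.Iic (n - 1)) :=
    (strictMonoOn_Iic_of_lt_succ (n := n - 1) fun m hm => hb m (by omega)).monotoneOn
  have hle {i i' : ℕ} (hii' : i ≤ i') (hi' : i' < n) : b i ≤ b i' :=
    hmono (show i ≤ n - 1 by omega) (show i' ≤ n - 1 by omega) hii'
  obtain ⟨hleft, hright, -⟩ := hz
  rcases lt_trichotomy j k with hjk | rfl | hkj
  · rw [leftEnd, if_neg (by omega)] at hleft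
    have h1 := hle (show j ≤ k - 1 by omega) (by omega)
    have h2 := hle (show k - 1 ≤ k by omega) hk
    nlinarith
  · exact le_rfl
  · rw [rightEnd, if_neg (by omega)] at hright
    have h1 := hle (show k + 1 ≤ j by omega) hj
    have h2 := hle (show k ≤ k + 1 by omega) (by omega)
    nlinarith

lemma abs_re_arctan_sub_arctan_le_half_of_mem_OmegaJ (hb : ∀ j, j + 1 < n → b j < b (j + 1))
    (ha : a ∈ Set.Ioo (0 : ℝ) (1 / 2)) (hk : k < n) (hz : z ∈ OmegaJ n b a k) {j : ℕ}
    (hj : j < n) :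
    |(Complex.arctan (((z.re - b j) / a : ℝ) + (z.im / a : ℝ) * I)).re
        - Real.arctan ((z.re - b j) / a)| ≤ a / 2 := by
  obtain ⟨ha0, ha⟩ := ha
  refine abs_re_arctan_add_mul_I_sub_arctan_le_half ha0 ha ?_
  have hnear := sq_re_sub_le_of_mem_OmegaJ hb hk hz hj
  calc (z.im / a) ^ 4 = z.im ^ 4 / a ^ 4 := div_pow _ _ _
    _ ≤ ((z.re - b k) ^ 2 + a ^ 2) ^ 3 / 16 / a ^ 4 := by
        gcongr; exact im_pow_four_le_of_mem_OmegaJ hz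
    _ ≤ ((z.re - b j) ^ 2 + a ^ 2) ^ 3 / 16 / a ^ 4 := by gcongr
    _ = a ^ 2 * (1 + ((z.re - b j) / a) ^ 2) ^ 3 / 16 := by field_simp; ring

lemma abs_re_hFun_sub_re_hFun_re_le_of_mem_OmegaJ (hb : ∀ j, j + 1 < n → b j < b (j + 1))
    (ha : a ∈ Set.Ioo (0 : ℝ) (1 / 2)) (hk : k < n) (hz : z ∈ OmegaJ n b a k) :
    |(hFun n b a z).re - (hFun n b a z.re).re|
      ≤ 1 / 2 * ∑ j ∈ Finset.range n, 1 / (2 : ℝ) ^ j := by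
  rw [re_hFun_sub_re_hFun_re, Finset.mul_sum]
  refine (Finset.abs_sum_le_sum_abs _ _).trans (Finset.sum_le_sum fun j hj => ?_)
  have hcoef : 0 < (2 : ℝ) ^ j * a := mul_pos (by positivity) ha.1
  rw [abs_mul, abs_of_pos (inv_pos.2 hcoef)]
  calc _ ≤ ((2 : ℝ) ^ j * a)⁻¹ * (a / 2) := by
        gcongr
        exact abs_re_arctan_sub_arctan_le_half_of_mem_OmegaJ hb ha hk hz (Finset.mem_range.1 hj)
    _ = 1 / 2 * (1 / 2 ^ j) := by field_simp [ha.1.ne']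

end Omega

lemma half_mul_sum_range_one_div_two_pow_lt_one (n : ℕ) :
    1 / 2 * ∑ j ∈ Finset.range n, 1 / (2 : ℝ) ^ j < 1 :=
  calc 1 / 2 * ∑ j ∈ Finset.range n, 1 / (2 : ℝ) ^ j = 1 - (1 / 2) ^ n := by
        simp only [← one_div_pow, geom_sum_eq (show (1 / 2 : ℝ) ≠ 1 by norm_num)]; ring
    _ < 1 := sub_lt_self 1 (by positivity)

theorem stmt10_general (n : ℕ) (b : ℕ → ℝ)
    (hbmono : ∀ j, j + 1 < n → b j < b (j + 1))
    (a : ℝ) (ha : a ∈ Set.Ioo (0 : ℝ) (1/2))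
    (k : ℕ) (hk : k < n) (z : ℂ) (hz : z ∈ OmegaJ n b a k) :
    |(hFun n b a z).re - (hFun n b a ((z.re : ℂ))).re|
        ≤ (1/2) * ∑ j ∈ Finset.range n, 1 / (2 : ℝ) ^ j ∧
    (1/2) * ∑ j ∈ Finset.range n, 1 / (2 : ℝ) ^ j < 1 ∧
    |(hFun n b a z).re - (hFun n b a ((z.re : ℂ))).re| < 1 := by
  have hbound := abs_re_hFun_sub_re_hFun_re_le_of_mem_OmegaJ hbmono ha hk hz
  have hgeom := half_mul_sum_range_one_div_two_pow_lt_one n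
  exact ⟨hbound, hgeom, hbound.trans_lt hgeom⟩

/-- For `(x,y) ∈ Ω_{a,k}` one has
`|u_a(x,y) - u_a(x,0)| ≤ (1/2) Σ_j 2^{1-j} < 1`, where `u_a = Re h_a`. -/
theorem stmt10 (n : ℕ) (hn : 1 ≤ n) (b : ℕ → ℝ)
    (hb0 : -(1/2) < b 0) (hbn : b (n - 1) < 1/2)
    (hbmono : ∀ j, j + 1 < n → b j < b (j + 1))
    (a : ℝ) (ha : a ∈ Set.Ioo (0 : ℝ) (1/2))
    (k : ℕ) (hk : k < n) (z : ℂ) (hz : z ∈ OmegaJ n b a k) :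
    |(hFun n b a z).re - (hFun n b a ((z.re : ℂ))).re|
        ≤ (1/2) * ∑ j ∈ Finset.range n, 1 / (2 : ℝ) ^ j ∧
    (1/2) * ∑ j ∈ Finset.range n, 1 / (2 : ℝ) ^ j < 1 ∧
    |(hFun n b a z).re - (hFun n b a ((z.re : ℂ))).re| < 1 :=
  stmt10_general n b hbmono a ha k hk z hz
end

section
/- For every a ∈ (0,1/2), every k ∈ {1,…,n}, and every x in the x-range of Ω_{a,k}, setting y_{x,a,k} = ((x−b_k)² + a²)^{3/4}/2, one has for all y with y_{x,a,k}/2 ≤ |y| ≤ y_{x,a,k}: |v_a(x,y)| > ((x−b_k)² + a²)^{−1/4} / (11 · 2^{n−1}), where v_a = Im h_a. -/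
open Complex Real Set Finset Filter RealInnerProductSpace

/-!
Through the logarithm, `Im arctan (u + iv) = ¼ log (((1+v)² + u²) / ((1-v)² + u²))`, which has
the sign of `v`. So every term of `Im h_a (x + iy)` has the sign of `y`, and `|v_a|` dominates
the `k`-th term alone. The inequality `log t ≥ 1 - 1/t` bounds that term below by
`|y| / (2^k ((x - b_k)² + (a + |y|)²))`. With `s = ((x - b_k)² + a²)^{1/4}` one has
`a ≤ s² < 4` and `s³/4 ≤ |y| ≤ s³/2`, and the claim reduces to `s⁴ + 2a|y| + y² < 11 s |y|`.
-/

open ComplexConjugate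

namespace Complex

/-- At the poles `z = ±I` both sides are `0`: `Complex.log 0 = 0` and `Real.log 0 = 0`. -/
theorem arctan_im_eq_log (z : ℂ) :
    (arctan z).im = Real.log (((1 + z.im) ^ 2 + z.re ^ 2) / ((1 - z.im) ^ 2 + z.re ^ 2)) / 4 := by
  have hnum : ‖1 + z * I‖ = √((1 - z.im) ^ 2 + z.re ^ 2) := by
    rw [show 1 + z * I = ((1 - z.im : ℝ) : ℂ) + (z.re : ℝ) * I by
      apply Complex.ext <;> simp [sub_eq_add_neg], norm_add_mul_I]
  have hden : ‖1 - z * I‖ = √((1 + z.im) ^ 2 + z.re ^ 2) := by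
    rw [show 1 - z * I = ((1 + z.im : ℝ) : ℂ) + (-z.re : ℝ) * I by
      apply Complex.ext <;> simp, norm_add_mul_I, neg_sq]
  have hlog : Real.log (((1 + z.im) ^ 2 + z.re ^ 2) / ((1 - z.im) ^ 2 + z.re ^ 2))
      = -Real.log (((1 - z.im) ^ 2 + z.re ^ 2) / ((1 + z.im) ^ 2 + z.re ^ 2)) := by
    rw [← Real.log_inv, inv_div]
  have him : ∀ w : ℂ, (-I / 2 * w).im = -w.re / 2 := fun w => by simp [div_eq_inv_mul]
  rw [arctan, him, log_re, norm_div, hnum, hden, ← Real.sqrt_div' _ (by positivity),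
    Real.log_sqrt (by positivity), hlog]
  ring

theorem arctan_conj_im (z : ℂ) : (arctan (conj z)).im = -(arctan z).im := by
  rw [arctan_im_eq_log, arctan_im_eq_log, conj_re, conj_im, ← neg_div, ← Real.log_inv, inv_div,
    sub_neg_eq_add, ← sub_eq_add_neg]

theorem arctan_im_nonneg {z : ℂ} (hz : 0 ≤ z.im) : 0 ≤ (arctan z).im := by
  rw [arctan_im_eq_log]
  rcases (by positivity : 0 ≤ (1 - z.im) ^ 2 + z.re ^ 2).eq_or_lt with h | h
  · simp [← h]
  · exact div_nonneg (Real.log_nonneg ((one_le_div h).2 (by nlinarith))) (by norm_num)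

theorem im_div_le_arctan_im {z : ℂ} (hz : z ≠ I) :
    z.im / ((1 + z.im) ^ 2 + z.re ^ 2) ≤ (arctan z).im := by
  have hA : 0 < (1 - z.im) ^ 2 + z.re ^ 2 := by
    refine (by positivity : (0:ℝ) ≤ _).lt_of_ne fun h => hz (Complex.ext ?_ ?_) <;>
      simp only [I_re, I_im] <;> nlinarith [sq_nonneg (1 - z.im), sq_nonneg z.re]
  rcases (by positivity : 0 ≤ (1 + z.im) ^ 2 + z.re ^ 2).eq_or_lt with hB | hB
  · simp [← hB, arctan_im_eq_log]
  have := Real.one_sub_inv_le_log_of_pos (div_pos hB hA)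
  rw [arctan_im_eq_log, inv_div] at *
  have : 1 - ((1 - z.im) ^ 2 + z.re ^ 2) / ((1 + z.im) ^ 2 + z.re ^ 2)
      = 4 * (z.im / ((1 + z.im) ^ 2 + z.re ^ 2)) := by
    field_simp; ring
  linarith

end Complex

section hFun

variable {n : ℕ} {b : ℕ → ℝ} {a : ℝ}

theorem hFun_im (z : ℂ) :
    (hFun n b a z).im = ∑ j ∈ range n, (arctan ((z - b j) / a)).im / (2 ^ j * a) := by
  simp only [hFun, im_sum]
  refine Finset.sum_congr rfl fun j _ => ?_
  rw [show (1 / ((2 : ℂ) ^ j * a)) = ((1 / (2 ^ j * a) : ℝ) : ℂ) by push_cast; rfl,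
    im_ofReal_mul]
  ring

theorem hFun_conj_im (z : ℂ) : (hFun n b a (conj z)).im = -(hFun n b a z).im := by
  simp only [hFun_im, ← Finset.sum_neg_distrib, ← neg_div]
  refine Finset.sum_congr rfl fun j _ => ?_
  rw [← arctan_conj_im, map_div₀, map_sub, conj_ofReal, conj_ofReal]

theorem hFun_im_ge {k : ℕ} (ha : 0 < a) (hk : k < n) {z : ℂ} (hz : 0 ≤ z.im)
    (hpole : z ≠ b k + a * I) :
    z.im / (2 ^ k * ((z.re - b k) ^ 2 + (a + z.im) ^ 2)) ≤ (hFun n b a z).im := by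
  have ha' : (a : ℂ) ≠ 0 := ofReal_ne_zero.2 ha.ne'
  have hre : ((z - b k) / a).re = (z.re - b k) / a := by simp [div_ofReal_re]
  have him : ∀ j, ((z - b j) / a).im = z.im / a := fun j => by simp [div_ofReal_im]
  have hwk : (z - b k) / a ≠ I := fun h =>
    hpole (by rw [div_eq_iff ha'] at h; linear_combination h)
  calc z.im / (2 ^ k * ((z.re - b k) ^ 2 + (a + z.im) ^ 2))
      = ((z - b k) / a).im / ((1 + ((z - b k) / a).im) ^ 2 + ((z - b k) / a).re ^ 2)
          / (2 ^ k * a) := by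
        rw [hre, him]; field_simp; ring
    _ ≤ (arctan ((z - b k) / a)).im / (2 ^ k * a) := by
        gcongr; exact im_div_le_arctan_im hwk
    _ ≤ ∑ j ∈ range n, (arctan ((z - b j) / a)).im / (2 ^ j * a) := by
        refine Finset.single_le_sum (f := fun j => (arctan ((z - b j) / a)).im / (2 ^ j * a))
          (fun j _ => div_nonneg (arctan_im_nonneg ?_) (by positivity)) (mem_range.2 hk)
        rw [him]; positivity
    _ = (hFun n b a z).im := (hFun_im z).symm

theorem abs_hFun_im_ge {k : ℕ} (ha : 0 < a) (hk : k < n) {z : ℂ}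
    (hpole₁ : z ≠ b k + a * I) (hpole₂ : z ≠ b k - a * I) :
    |z.im| / (2 ^ k * ((z.re - b k) ^ 2 + (a + |z.im|) ^ 2)) ≤ |(hFun n b a z).im| := by
  rcases le_or_gt 0 z.im with hz | hz
  · rw [abs_of_nonneg hz]
    exact (hFun_im_ge ha hk hz hpole₁).trans (le_abs_self _)
  · have hconj : conj z ≠ b k + a * I := fun h => hpole₂ (by
      rw [← conj_conj z, h]; simp [sub_eq_add_neg])
    have := hFun_im_ge ha hk (by simpa using hz.le) hconj
    rw [conj_re, conj_im, hFun_conj_im] at this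
    rw [abs_of_neg hz]
    exact this.trans (neg_le_abs _)

end hFun

theorem inv_div_lt_of_bounds {s a w : ℝ} {k m : ℕ} (hs : 0 < s) (hs2 : s < 2) (ha : 0 ≤ a)
    (has : a ≤ s ^ 2) (hw₁ : s ^ 3 / 4 ≤ w) (hw₂ : w ≤ s ^ 3 / 2) (hkm : k ≤ m) :
    s⁻¹ / (11 * 2 ^ m) < w / (2 ^ k * (s ^ 4 + 2 * a * w + w ^ 2)) := by
  have hw : 0 < w := lt_of_lt_of_le (by positivity) hw₁
  -- `s⁴ ≤ 4sw`, `2aw ≤ 2s²w < 4sw` and `w² ≤ s³w/2 < 2sw`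
  have hkey : s ^ 4 + 2 * a * w + w ^ 2 < 11 * s * w := by
    nlinarith [mul_le_mul_of_nonneg_left has (by positivity : 0 ≤ 2 * w),
      mul_le_mul_of_nonneg_left hw₂ hw.le, mul_lt_mul_of_pos_left hs2 (by positivity : 0 < s * w)]
  have h2k : (2 : ℝ) ^ k ≤ 2 ^ m := pow_le_pow_right₀ (by norm_num) hkm
  rw [div_lt_div_iff₀ (by positivity) (by positivity), ← div_eq_inv_mul, div_lt_iff₀ hs]
  calc 2 ^ k * (s ^ 4 + 2 * a * w + w ^ 2) ≤ 2 ^ m * (s ^ 4 + 2 * a * w + w ^ 2) := by gcongr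
    _ < 2 ^ m * (11 * s * w) := by gcongr
    _ = w * (11 * 2 ^ m) * s := by ring

section Nodes

variable {n : ℕ} {b : ℕ → ℝ}

theorem abs_lt_half_of_strictMono (hb₀ : -(1/2) < b 0) (hbn : b (n - 1) < 1/2)
    (hb : ∀ j, j + 1 < n → b j < b (j + 1)) {j : ℕ} (hj : j < n) : |b j| < 1/2 := by
  have hmono : MonotoneOn b (Set.Iic (n - 1)) :=
    (strictMonoOn_Iic_of_lt_succ (n := n - 1) fun m hm => hb m (by omega)).monotoneOn
  have h₀ := hmono (by simp) (by simp; omega) (Nat.zero_le j)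
  have h₁ := hmono (by simp; omega) (by simp) (show j ≤ n - 1 by omega)
  rw [abs_lt]; constructor <;> linarith

theorem abs_sub_lt_one_of_mem_Icc (hb : ∀ j < n, |b j| < 1/2) {k : ℕ} (hk : k < n) {x : ℝ}
    (hx₁ : leftEnd b k ≤ x) (hx₂ : x ≤ rightEnd n b k) : |x - b k| < 1 := by
  have hbk := abs_lt.1 (hb k hk)
  unfold leftEnd rightEnd at *
  rw [abs_lt]
  split_ifs at hx₁ hx₂ with h₁ h₂ h₂
  · constructor <;> linarith
  · have := abs_lt.1 (hb (k + 1) (by omega)); constructor <;> linarith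
  · have := abs_lt.1 (hb (k - 1) (by omega)); constructor <;> linarith
  · have := abs_lt.1 (hb (k + 1) (by omega)); have := abs_lt.1 (hb (k - 1) (by omega))
    constructor <;> linarith

end Nodes

theorem Real.exists_pos_eq_pow_four {R : ℝ} (hR : 0 < R) :
    ∃ s > 0, R = s ^ 4 ∧ ∀ r : ℝ, R ^ r = s ^ (4 * r) := by
  refine ⟨R ^ (1/4 : ℝ), by positivity, ?_, fun r => ?_⟩
  · rw [← Real.rpow_natCast, ← Real.rpow_mul hR.le]; norm_num
  · rw [← Real.rpow_mul hR.le]; ring_nf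

theorem stmt14_general (n : ℕ) (b : ℕ → ℝ)
    (hb0 : -(1/2) < b 0) (hbn : b (n - 1) < 1/2)
    (hbmono : ∀ j, j + 1 < n → b j < b (j + 1))
    (a : ℝ) (ha : a ∈ Set.Ioo (0 : ℝ) (1/2))
    (k : ℕ) (hk : k < n) (x : ℝ) (hx1 : leftEnd b k ≤ x) (hx2 : x ≤ rightEnd n b k)
    (y : ℝ)
    (hy1 : ((x - b k) ^ 2 + a ^ 2) ^ ((3 : ℝ)/4) / 2 / 2 ≤ |y|)
    (hy2 : |y| ≤ ((x - b k) ^ 2 + a ^ 2) ^ ((3 : ℝ)/4) / 2) :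
    |(hFun n b a ((x : ℂ) + (y : ℂ) * Complex.I)).im|
      > ((x - b k) ^ 2 + a ^ 2) ^ (-(1/4) : ℝ) / (11 * 2 ^ (n - 1)) := by
  obtain ⟨ha₀, ha₁⟩ := ha
  have hxb := abs_sub_lt_one_of_mem_Icc
    (fun j hj => abs_lt_half_of_strictMono hb0 hbn hbmono hj) hk hx1 hx2
  set R := (x - b k) ^ 2 + a ^ 2 with hR
  obtain ⟨s, hs, hRs, hRpow⟩ := Real.exists_pos_eq_pow_four (show 0 < R by positivity)
  rw [hRpow, show (4 : ℝ) * (3 / 4) = 3 by norm_num, Real.rpow_ofNat] at hy1 hy2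
  rw [hRpow, show (4 : ℝ) * -(1 / 4) = -1 by norm_num, Real.rpow_neg_one]
  have hs2 : s < 2 := by
    refine lt_of_pow_lt_pow_left₀ 4 (by norm_num) ?_
    nlinarith [abs_lt.1 hxb]
  have has : a ≤ s ^ 2 := by nlinarith
  have hpole : ∀ ε : ℝ, |ε| = a → (x : ℂ) + y * I ≠ b k + ε * I := by
    intro ε hε h
    have hre : x = b k := by simpa using congrArg re h
    have him : y = ε := by simpa using congrArg im h
    subst hre him
    -- on the line `x = b k` we have `s² = a`, so `|y| ≤ s³/2 < a`
    have h₁ : a < s ^ 2 := by nlinarith [pow_pos hs 2]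
    have h₂ : a ^ 2 < (s ^ 2) ^ 2 := by gcongr
    nlinarith
  have hbound := abs_hFun_im_ge ha₀ hk (hpole a (abs_of_pos ha₀)) (by
    simpa [sub_eq_add_neg] using hpole (-a) (by simp [abs_of_pos ha₀]))
  calc s⁻¹ / (11 * 2 ^ (n - 1))
      < |y| / (2 ^ k * (s ^ 4 + 2 * a * |y| + |y| ^ 2)) :=
        inv_div_lt_of_bounds hs hs2 ha₀.le has (by linarith) hy2 (by omega)
    _ = |y| / (2 ^ k * ((x - b k) ^ 2 + (a + |y|) ^ 2)) := by rw [← hRs, hR]; ring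
    _ ≤ _ := by simpa using hbound

/-- For `x` in the x-range of `Ω_{a,k}` and `y_{x,a,k}/2 ≤ |y| ≤ y_{x,a,k}`,
where `y_{x,a,k} = ((x-b_k)²+a²)^{3/4}/2`, one has
`|v_a(x,y)| > ((x-b_k)²+a²)^{-1/4}/(11·2^{n-1})`, where `v_a = Im h_a`. -/
theorem stmt14 (n : ℕ) (hn : 1 ≤ n) (b : ℕ → ℝ)
    (hb0 : -(1/2) < b 0) (hbn : b (n - 1) < 1/2)
    (hbmono : ∀ j, j + 1 < n → b j < b (j + 1))
    (a : ℝ) (ha : a ∈ Set.Ioo (0 : ℝ) (1/2))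
    (k : ℕ) (hk : k < n) (x : ℝ) (hx1 : leftEnd b k ≤ x) (hx2 : x ≤ rightEnd n b k)
    (y : ℝ)
    (hy1 : ((x - b k) ^ 2 + a ^ 2) ^ ((3 : ℝ)/4) / 2 / 2 ≤ |y|)
    (hy2 : |y| ≤ ((x - b k) ^ 2 + a ^ 2) ^ ((3 : ℝ)/4) / 2) :
    |(hFun n b a ((x : ℂ) + (y : ℂ) * Complex.I)).im|
      > ((x - b k) ^ 2 + a ^ 2) ^ (-(1/4) : ℝ) / (11 * 2 ^ (n - 1)) :=
  stmt14_general n b hb0 hbn hbmono a ha k hk x hx1 hx2 y hy1 hy2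
end

section
/- For every a ∈ (0,1/2), the map F_a : Ω_a → ℝ³ is injective; that is, F_a is an embedding of the domain Ω_a. -/
/-!
With `h = h_a`, the three components of `F_a` have derivatives `-i sin h`, `i cos h` and `1`.
Since `G₃' = 1`, `G₃ z - z` is constant along the paths `z → Re z → Re w → w`, which stay in
`Ω_a`, so `F_a z = F_a w` forces `Re z = Re w`. On a vertical segment of `Ω_a` over `x`, the real
part of `h` stays within `50/49 < π/2` of `u₀ = Re h(x)`: the height of the cell is small enough
that the `j`-th arctan term moves by at most `(25/49) 2^{-j}`. Hence `Φ = sin u₀ G₁ - cos u₀ G₂`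
satisfies `∂ₜ Re Φ(x + i t) = cos(Re h - u₀) cosh(Im h) > 0`, and `Re Φ` separates the points of
the segment.
-/

open Complex Real Set Finset Filter RealInnerProductSpace

theorem Complex.hasDerivAt_arctan_s17 {z : ℂ} (h : z.re ≠ 0 ∨ |z.im| < 1) :
    HasDerivAt arctan (1 / (1 + z ^ 2)) z := by
  have hden : 1 - z * I ≠ 0 := by
    intro h0
    have hre := congrArg re h0
    have him := congrArg im h0
    simp only [sub_re, sub_im, one_re, one_im, mul_re, mul_im, I_re, I_im, zero_re, zero_im,
      mul_zero, mul_one, zero_sub, sub_neg_eq_add, add_zero, neg_eq_zero] at hre him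
    rcases h with h | h
    · exact h him
    · rw [abs_lt] at h; linarith
  have hslit : (1 + z * I) / (1 - z * I) ∈ slitPlane := by
    have hN : 0 < normSq (1 - z * I) := normSq_pos.mpr hden
    rw [mem_slitPlane_iff, div_re, div_im]
    simp only [add_re, add_im, sub_re, sub_im, one_re, one_im, mul_re, mul_im, I_re, I_im]
    by_cases hx : z.re = 0
    · have hy : |z.im| < 1 := h.resolve_left (not_not.mpr hx)
      left
      rw [hx, ← add_div]
      apply div_pos _ hN
      nlinarith [abs_lt.mp hy]
    · right
      rw [← sub_div]
      exact div_ne_zero (by ring_nf; simpa using hx) hN.ne'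
  have hq : HasDerivAt (fun w => (1 + w * I) / (1 - w * I)) (2 * I / (1 - z * I) ^ 2) z := by
    refine ((((hasDerivAt_id' z).mul_const I).const_add 1).div
      (((hasDerivAt_id' z).mul_const I).const_sub 1) hden).congr_deriv ?_
    ring
  refine ((hq.clog hslit).const_mul (-I / 2)).congr_deriv ?_
  have h1 : (1 : ℂ) + z ^ 2 = (1 + z * I) * (1 - z * I) := by ring_nf; rw [I_sq]; ring
  rw [h1]
  field_simp
  ring_nf
  rw [I_sq]; ring

theorem Complex.re_cos (z : ℂ) : (cos z).re = Real.cos z.re * Real.cosh z.im := by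
  rw [cos_eq]; simp [← ofReal_cos, ← ofReal_cosh, ← ofReal_sinh, ← ofReal_sin]

theorem half_mul_exp_sub_exp (w : ℂ) :
    (1/2) * (exp (-I * w) - exp (I * w)) = -I * Complex.sin w := by
  rw [Complex.sin]; ring_nf; rw [I_sq]; ring

theorem I_div_two_mul_exp_add_exp (w : ℂ) :
    (I/2) * (exp (-I * w) + exp (I * w)) = I * Complex.cos w := by
  rw [Complex.cos]; ring_nf

theorem re_lt_re_of_hasDerivAt_segment {f f' : ℂ → ℂ} {z w : ℂ}
    (hf : ∀ ζ ∈ segment ℝ z w, HasDerivAt f (f' ζ) ζ)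
    (hpos : ∀ ζ ∈ segment ℝ z w, 0 < ((w - z) * f' ζ).re) :
    (f z).re < (f w).re := by
  let γ : ℂ → ℂ := fun s => z + s * (w - z)
  have hγ : ∀ t ∈ Icc (0 : ℝ) 1, γ t ∈ segment ℝ z w := fun t ht => by
    rw [segment_eq_image']; exact ⟨t, ht, by simp [γ, real_smul]⟩
  have hderiv : ∀ t ∈ Icc (0 : ℝ) 1,
      HasDerivAt (fun s : ℝ => (f (γ s)).re) ((w - z) * f' (γ t)).re t := fun t ht => by
    have hγ' : HasDerivAt γ (w - z) t :=
      (((hasDerivAt_id' (t : ℂ)).mul_const (w - z)).const_add z).congr_deriv (one_mul _)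
    simpa [mul_comm] using ((hf _ (hγ t ht)).comp (t : ℂ) hγ').real_of_complex
  obtain ⟨c, hc, hslope⟩ :=
    exists_hasDerivAt_eq_slope (fun s : ℝ => (f (γ s)).re) _ zero_lt_one
    (fun t ht => (hderiv t ht).continuousAt.continuousWithinAt)
    (fun t ht => hderiv t (Ioo_subset_Icc_self ht))
  have := hpos _ (hγ c (Ioo_subset_Icc_self hc))
  simp only [γ, ofReal_one, ofReal_zero, one_mul, zero_mul, add_zero, add_sub_cancel,
    sub_zero, div_one] at hslope
  linarith

theorem sub_eq_sub_of_hasDerivAt_one_on_segment {f : ℂ → ℂ} {z w : ℂ}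
    (hf : ∀ ζ ∈ segment ℝ z w, HasDerivAt f 1 ζ) : f w - f z = w - z := by
  have h := (convex_segment z w).norm_image_sub_le_of_norm_hasDerivWithin_le
    (f := fun ζ => f ζ - ζ) (f' := fun _ => 0) (C := 0)
    (fun ζ hζ => ((hf ζ hζ).sub (hasDerivAt_id' ζ)).hasDerivWithinAt.congr_deriv (sub_self 1))
    (fun _ _ => by simp) (left_mem_segment ℝ z w) (right_mem_segment ℝ z w)
  rw [zero_mul, norm_le_zero_iff] at h
  linear_combination h

theorem abs_sub_le_of_abs_deriv_le_mul_abs_of_nonneg {f f' : ℝ → ℝ} {M y : ℝ} (hy : 0 ≤ y)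
    (hf : ∀ t ∈ Icc 0 y, HasDerivAt f (f' t) t) (hf' : ∀ t ∈ Icc 0 y, |f' t| ≤ M * t) :
    |f y - f 0| ≤ M * y ^ 2 / 2 := by
  have hB : ∀ t, HasDerivAt (fun t => M * t ^ 2 / 2) (M * t) t := fun t =>
    (((hasDerivAt_pow 2 t).const_mul M).div_const 2).congr_deriv (by ring)
  simpa using image_norm_le_of_norm_deriv_right_le_deriv_boundary (f := fun t => f t - f 0)
    (fun t ht => ((hf t ht).continuousAt.continuousWithinAt).sub continuousWithinAt_const)
    (fun t ht => ((hf t (Ico_subset_Icc_self ht)).sub_const (f 0)).hasDerivWithinAt)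
    (by simp) hB (fun t ht => hf' t (Ico_subset_Icc_self ht)) (right_mem_Icc.mpr hy)

theorem abs_sub_le_of_abs_deriv_le_mul_abs {f f' : ℝ → ℝ} {M y : ℝ}
    (hf : ∀ t, |t| ≤ |y| → HasDerivAt f (f' t) t) (hf' : ∀ t, |t| ≤ |y| → |f' t| ≤ M * |t|) :
    |f y - f 0| ≤ M * y ^ 2 / 2 := by
  have hIcc : ∀ {s : ℝ}, 0 ≤ s → ∀ t ∈ Icc 0 s, |t| ≤ |s| := fun hs t ht => by
    rw [abs_of_nonneg ht.1, abs_of_nonneg hs]; exact ht.2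
  rcases le_total 0 y with hy | hy
  · exact abs_sub_le_of_abs_deriv_le_mul_abs_of_nonneg hy
      (fun t ht => hf t (hIcc hy t ht))
      (fun t ht => (hf' t (hIcc hy t ht)).trans_eq (by rw [abs_of_nonneg ht.1]))
  · have hy' : 0 ≤ -y := neg_nonneg.mpr hy
    have key := abs_sub_le_of_abs_deriv_le_mul_abs_of_nonneg (f := fun t => f (-t))
      (f' := fun t => -f' (-t)) hy'
      (fun t ht => ((hf (-t) (by simpa using hIcc hy' t ht)).comp t
        (hasDerivAt_neg t)).congr_deriv (by ring))
      (fun t ht => by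
        simpa [abs_of_nonneg ht.1] using hf' (-t) (by simpa using hIcc hy' t ht))
    simpa using key

theorem ofReal_add_mul_I_sq_add_sq (u t a : ℝ) :
    ((u : ℂ) + t * I) ^ 2 + (a : ℂ) ^ 2
      = ((u ^ 2 - t ^ 2 + a ^ 2 : ℝ) : ℂ) + ((2 * u * t : ℝ) : ℂ) * I := by
  push_cast; ring_nf; rw [I_sq]; ring

theorem hasDerivAt_re_arctan_vertical {a u t : ℝ} (ha : 0 < a) (h : u ≠ 0 ∨ |t| < a) :
    HasDerivAt (fun s : ℝ => (arctan ((u + s * I) / a)).re)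
      (2 * a * u * t / normSq (((u : ℂ) + t * I) ^ 2 + (a : ℂ) ^ 2)) t := by
  have ha' : (a : ℂ) ≠ 0 := ofReal_ne_zero.mpr ha.ne'
  have hq : ((u + t * I) / a : ℂ).re ≠ 0 ∨ |((u + t * I) / a : ℂ).im| < 1 := by
    simp only [div_ofReal_re, div_ofReal_im, add_re, add_im, ofReal_re, ofReal_im, mul_re,
      mul_im, I_re, I_im]
    simpa [abs_div, abs_of_pos ha, div_lt_one ha, ha.ne'] using h
  have hW : ((u : ℂ) + t * I) ^ 2 + (a : ℂ) ^ 2 ≠ 0 := by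
    rw [ofReal_add_mul_I_sq_add_sq]
    intro h0
    have hre := congrArg re h0
    have him := congrArg im h0
    simp only [add_re, add_im, mul_re, mul_im, ofReal_re, ofReal_im, I_re, I_im, zero_re,
      zero_im] at hre him
    rcases h with h | h
    · have ht : t = 0 := by
        have : u * t = 0 := by linarith
        simpa [h] using this
      subst ht; nlinarith [sq_nonneg u]
    · nlinarith [abs_lt.mp h, sq_nonneg u]
  have hline : HasDerivAt (fun s : ℂ => (u + s * I) / a) (I / a) t :=
    (((hasDerivAt_id' (t : ℂ)).mul_const I).const_add (u : ℂ)).div_const (a : ℂ) |>.congr_deriv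
      (by rw [one_mul])
  refine ((Complex.hasDerivAt_arctan_s17 hq).comp (t : ℂ) hline).real_of_complex.congr_deriv ?_
  have hval : 1 / (1 + ((u + t * I) / a : ℂ) ^ 2) * (I / a)
      = I * a / (((u : ℂ) + t * I) ^ 2 + (a : ℂ) ^ 2) := by
    have h1 : 1 + ((u + t * I) / a : ℂ) ^ 2 = (((u : ℂ) + t * I) ^ 2 + (a : ℂ) ^ 2) / a ^ 2 := by
      field_simp; ring
    rw [h1]
    field_simp
  rw [hval, div_re, ofReal_add_mul_I_sq_add_sq]
  simp only [add_re, add_im, mul_re, mul_im, ofReal_re, ofReal_im, I_re, I_im]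
  ring

theorem abs_re_arctan_sub_le {a u y : ℝ} (ha : 0 < a)
    (hy : 10 * y ^ 2 ≤ 3 * (u ^ 2 + a ^ 2)) (hyu : 4 * |u| * y ^ 2 ≤ (u ^ 2 + a ^ 2) ^ 2) :
    |(arctan ((u + y * I) / a)).re - (arctan ((u : ℂ) / a)).re| ≤ 25 / 49 * a := by
  set r := u ^ 2 + a ^ 2
  set N : ℝ → ℝ := fun t => normSq (((u : ℂ) + t * I) ^ 2 + (a : ℂ) ^ 2)
  have hr : 0 < r := by positivity
  have hsmall : ∀ t, |t| ≤ |y| → 10 * t ^ 2 ≤ 3 * r := fun t ht => by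
    nlinarith [sq_le_sq.mpr ht]
  have hderiv : ∀ t, |t| ≤ |y| → HasDerivAt (fun s : ℝ => (arctan ((u + s * I) / a)).re)
      (2 * a * u * t / N t) t := fun t ht => by
    refine hasDerivAt_re_arctan_vertical ha ?_
    by_cases hu : u = 0
    · right
      have : t ^ 2 < a ^ 2 := by nlinarith [hsmall t ht]
      simpa [abs_of_pos ha] using sq_lt_sq.mp this
    · exact Or.inl hu
  -- `N t ≥ (r - t²)² ≥ (7r/10)²`, since `t² ≤ 3r/10` on the segment
  have hbound : ∀ t, |t| ≤ |y| → |2 * a * u * t / N t| ≤ 200 * a * |u| / (49 * r ^ 2) * |t| :=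
    fun t ht => by
      have hN : 49 * r ^ 2 / 100 ≤ N t := by
        simp only [N, ofReal_add_mul_I_sq_add_sq, normSq_add_mul_I]
        nlinarith [hsmall t ht, sq_nonneg (2 * u * t), sq_nonneg t]
      have hN0 : 0 < N t := lt_of_lt_of_le (by positivity) hN
      rw [abs_div, abs_of_pos hN0, div_le_iff₀ hN0]
      calc |2 * a * u * t| = 200 * a * |u| / (49 * r ^ 2) * |t| * (49 * r ^ 2 / 100) := by
            rw [abs_mul, abs_mul, abs_mul, abs_of_pos ha]; field_simp; ring
        _ ≤ _ := by gcongr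
  have key := abs_sub_le_of_abs_deriv_le_mul_abs hderiv hbound
  simp only [ofReal_zero, zero_mul, add_zero] at key
  refine key.trans ?_
  rw [div_mul_eq_mul_div, div_div, div_le_iff₀ (by positivity)]
  nlinarith

theorem pow_four_le_of_abs_le_rpow {y r : ℝ} (hr : 0 ≤ r) (hy : |y| ≤ r ^ ((3 : ℝ) / 4) / 2) :
    16 * y ^ 4 ≤ r ^ 3 := by
  have h := pow_le_pow_left₀ (abs_nonneg _) hy 4
  rw [div_pow, ← Real.rpow_natCast (r ^ _), ← Real.rpow_mul hr, pow_abs,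
    abs_of_nonneg (by positivity)] at h
  norm_num at h
  linarith

theorem re_eq_and_im_mem_uIcc_of_mem_segment {z w ζ : ℂ} (hre : z.re = w.re)
    (hζ : ζ ∈ segment ℝ z w) : ζ.re = z.re ∧ ζ.im ∈ uIcc z.im w.im := by
  have hre' : ζ.re ∈ segment ℝ z.re w.re := by
    simpa using image_segment ℝ reLm.toAffineMap z w ▸ mem_image_of_mem _ hζ
  have him' : ζ.im ∈ segment ℝ z.im w.im := by
    simpa using image_segment ℝ imLm.toAffineMap z w ▸ mem_image_of_mem _ hζ
  rw [hre, segment_same, mem_singleton_iff] at hre'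
  exact ⟨hre'.trans hre.symm, segment_eq_uIcc z.im w.im ▸ him'⟩

section Omega

variable {n : ℕ} {b : ℕ → ℝ} {a : ℝ}

theorem mem_OmegaA {z : ℂ} :
    z ∈ OmegaA n b a ↔ ∃ k < n, z ∈ OmegaJ n b a k := by
  simp [OmegaA]

theorem mk_mem_OmegaA_of_abs_le {t : ℝ} {z : ℂ}
    (hz : z ∈ OmegaA n b a) (ht : |t| ≤ |z.im|) : (⟨z.re, t⟩ : ℂ) ∈ OmegaA n b a := by
  obtain ⟨k, hk, hl, hr, him⟩ := mem_OmegaA.mp hz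
  exact mem_OmegaA.mpr ⟨k, hk, hl, hr, ht.trans him⟩

theorem segment_subset_OmegaA_of_re_eq {z w : ℂ}
    (hz : z ∈ OmegaA n b a) (hw : w ∈ OmegaA n b a) (hre : z.re = w.re) :
    segment ℝ z w ⊆ OmegaA n b a := by
  intro ζ hζ
  obtain ⟨hζre, hζim⟩ := re_eq_and_im_mem_uIcc_of_mem_segment hre hζ
  have hmax : |ζ.im| ≤ max |z.im| |w.im| := by
    rcases le_total z.im w.im with h | h
    · rw [uIcc_of_le h] at hζim; exact abs_le_max_abs_abs hζim.1 hζim.2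
    · rw [uIcc_of_ge h] at hζim; rw [max_comm]; exact abs_le_max_abs_abs hζim.1 hζim.2
  rcases le_total |z.im| |w.im| with h | h
  · rw [max_eq_right h] at hmax
    have := mk_mem_OmegaA_of_abs_le hw hmax
    rwa [show ζ = ⟨w.re, ζ.im⟩ from Complex.ext (hζre.trans hre) rfl]
  · rw [max_eq_left h] at hmax
    have := mk_mem_OmegaA_of_abs_le hz hmax
    rwa [show ζ = ⟨z.re, ζ.im⟩ from Complex.ext hζre rfl]

theorem exists_cell_of_le_rightEnd {x : ℝ} (hx : -(1/2) ≤ x) :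
    ∀ j < n, x ≤ rightEnd n b j → ∃ k < n, leftEnd b k ≤ x ∧ x ≤ rightEnd n b k := by
  intro j
  induction j with
  | zero => exact fun hn hxr => ⟨0, hn, by simpa [leftEnd] using hx, hxr⟩
  | succ j ih =>
    intro hj hxr
    by_cases hxj : x ≤ rightEnd n b j
    · exact ih (by omega) hxj
    · refine ⟨j + 1, hj, ?_, hxr⟩
      rw [rightEnd, if_neg (by omega)] at hxj
      simp only [leftEnd, Nat.add_one_ne_zero, if_false, Nat.add_sub_cancel]
      linarith

theorem ofReal_mem_OmegaA (hn : 0 < n) {x : ℝ}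
    (hx : x ∈ Set.Icc (-(1/2)) (1/2)) : (x : ℂ) ∈ OmegaA n b a := by
  obtain ⟨k, hk, hl, hr⟩ := exists_cell_of_le_rightEnd (n := n) (b := b) hx.1 (n - 1) (by omega)
    (by simpa [rightEnd] using hx.2)
  exact mem_OmegaA.mpr ⟨k, hk, by simpa using hl, by simpa using hr, by simp; positivity⟩

theorem segment_ofReal_subset_OmegaA (hn : 0 < n) {x y : ℝ}
    (hx : x ∈ Set.Icc (-(1/2)) (1/2)) (hy : y ∈ Set.Icc (-(1/2)) (1/2)) :
    segment ℝ (x : ℂ) y ⊆ OmegaA n b a := by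
  rintro _ ⟨s, t, hs, ht, hst, rfl⟩
  convert ofReal_mem_OmegaA (b := b) (a := a) hn
    ((convex_Icc _ _).segment_subset hx hy ⟨s, t, hs, ht, hst, rfl⟩) using 1
  push_cast [real_smul, smul_eq_mul]
  rfl

theorem neg_half_le_leftEnd (hb : ∀ j < n, b j ∈ Set.Ioo (-(1/2)) (1/2))
    {k : ℕ} (hk : k < n) : -(1/2) ≤ leftEnd b k := by
  unfold leftEnd
  split_ifs with h0
  · rfl
  · linarith [(hb (k - 1) (by omega)).1, (hb k hk).1]

theorem rightEnd_le_half (hb : ∀ j < n, b j ∈ Set.Ioo (-(1/2)) (1/2))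
    {k : ℕ} (hk : k < n) : rightEnd n b k ≤ 1/2 := by
  unfold rightEnd
  split_ifs with h0
  · rfl
  · linarith [(hb (k + 1) (by omega)).2, (hb k hk).2]

theorem re_mem_Icc_of_mem_OmegaA
    (hb : ∀ j < n, b j ∈ Set.Ioo (-(1/2)) (1/2)) {z : ℂ} (hz : z ∈ OmegaA n b a) :
    z.re ∈ Set.Icc (-(1/2)) (1/2) := by
  obtain ⟨k, hk, hl, hr, -⟩ := mem_OmegaA.mp hz
  exact ⟨(neg_half_le_leftEnd hb hk).trans hl, hr.trans (rightEnd_le_half hb hk)⟩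

theorem sq_sub_le_sq_sub_of_mem_cell (hmono : MonotoneOn b (Set.Iio n))
    {k j : ℕ} (hk : k < n) (hj : j < n) {x : ℝ} (hl : leftEnd b k ≤ x)
    (hr : x ≤ rightEnd n b k) : (x - b k) ^ 2 ≤ (x - b j) ^ 2 := by
  have hb : ∀ {i i'}, i ≤ i' → i' < n → b i ≤ b i' := fun hii' hi' =>
    hmono (Set.mem_Iio.mpr (lt_of_le_of_lt hii' hi')) (Set.mem_Iio.mpr hi') hii'
  rcases lt_trichotomy j k with h | rfl | h
  · rw [leftEnd, if_neg (by omega)] at hl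
    have h1 := hb (show j ≤ k - 1 by omega) (by omega)
    have h2 := hb h.le hk
    nlinarith
  · rfl
  · rw [rightEnd, if_neg (by omega)] at hr
    have h1 := hb (show k + 1 ≤ j by omega) hj
    have h2 := hb h.le hj
    nlinarith

theorem sub_eq_sub_of_mem_OmegaA
    (hb : ∀ j < n, b j ∈ Set.Ioo (-(1/2)) (1/2)) {G : ℂ → ℂ}
    (hG : ∀ ζ ∈ OmegaA n b a, HasDerivAt G 1 ζ) {z w : ℂ} (hz : z ∈ OmegaA n b a)
    (hw : w ∈ OmegaA n b a) : G w - G z = w - z := by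
  obtain ⟨k, hk, -⟩ := mem_OmegaA.mp hz
  have hzx := re_mem_Icc_of_mem_OmegaA hb hz
  have hwx := re_mem_Icc_of_mem_OmegaA hb hw
  have hz' := ofReal_mem_OmegaA (n := n) (b := b) (a := a) (by omega) hzx
  have hw' := ofReal_mem_OmegaA (n := n) (b := b) (a := a) (by omega) hwx
  have h₁ := sub_eq_sub_of_hasDerivAt_one_on_segment fun ζ hζ =>
    hG ζ (segment_subset_OmegaA_of_re_eq hz' hz (by simp) hζ)
  have h₂ := sub_eq_sub_of_hasDerivAt_one_on_segment fun ζ hζ =>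
    hG ζ (segment_ofReal_subset_OmegaA (by omega) hzx hwx hζ)
  have h₃ := sub_eq_sub_of_hasDerivAt_one_on_segment fun ζ hζ =>
    hG ζ (segment_subset_OmegaA_of_re_eq hw' hw (by simp) hζ)
  linear_combination h₃ + h₂ - h₁

theorem re_hFun_sub_re_hFun (z w : ℂ) :
    (hFun n b a z).re - (hFun n b a w).re = ∑ j ∈ Finset.range n, 1 / (2 ^ j * a) *
      ((arctan ((z - b j) / a)).re - (arctan ((w - b j) / a)).re) := by
  simp only [hFun, re_sum, ← Finset.sum_sub_distrib, mul_sub]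
  refine Finset.sum_congr rfl fun j _ => ?_
  rw [show 1 / ((2 : ℂ) ^ j * a) = ((1 / (2 ^ j * a) : ℝ) : ℂ) by push_cast; rfl,
    re_ofReal_mul, re_ofReal_mul]

theorem abs_re_arctan_sub_le_of_mem_OmegaJ (ha : a ∈ Set.Ioo 0 (1/2))
    (hb : ∀ j < n, b j ∈ Set.Ioo (-(1/2)) (1/2)) (hmono : MonotoneOn b (Set.Iio n))
    {k j : ℕ} (hk : k < n) (hj : j < n) {z : ℂ} (hz : z ∈ OmegaJ n b a k) :
    |(arctan ((z - b j) / a)).re - (arctan ((z.re - b j : ℂ) / a)).re| ≤ 25 / 49 * a := by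
  obtain ⟨hl, hr, him⟩ := hz
  have hx := re_mem_Icc_of_mem_OmegaA (a := a) hb (mem_OmegaA.mpr ⟨k, hk, hl, hr, him⟩)
  set u := z.re - b j
  set r := u ^ 2 + a ^ 2
  have hr0 : 0 < r := by have := ha.1; positivity
  have hrle : r ≤ 5 / 4 := by
    have hu : |u| ≤ 1 :=
      abs_le.mpr ⟨by linarith [hx.1, (hb j hj).2], by linarith [hx.2, (hb j hj).1]⟩
    nlinarith [sq_abs u, abs_nonneg u, ha.1, ha.2]
  -- `b k` is the centre nearest to `z.re`, so the height of the cell is also bounded via `r`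
  have hy4 : 16 * z.im ^ 4 ≤ r ^ 3 :=
    (pow_four_le_of_abs_le_rpow (by positivity) him).trans <| pow_le_pow_left₀ (by positivity)
      (by linarith [sq_sub_le_sq_sub_of_mem_cell hmono hk hj hl hr]) 3
  have hy : 10 * z.im ^ 2 ≤ 3 * r := by
    refine (pow_le_pow_iff_left₀ (by positivity) (by positivity) two_ne_zero).mp ?_
    nlinarith
  have hyu : 4 * |u| * z.im ^ 2 ≤ r ^ 2 := by
    refine (pow_le_pow_iff_left₀ (by positivity) (by positivity) two_ne_zero).mp ?_
    nlinarith [sq_abs u, pow_pos hr0 3, sq_nonneg (z.im ^ 2)]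
  have key := abs_re_arctan_sub_le ha.1 hy hyu
  have hzu : (u : ℂ) + z.im * I = z - b j := Complex.ext (by simp [u]) (by simp)
  rwa [hzu, show ((u : ℝ) : ℂ) = z.re - b j by push_cast [u]; rfl] at key

theorem abs_re_hFun_sub_re_hFun_re_le (ha : a ∈ Set.Ioo 0 (1/2))
    (hb : ∀ j < n, b j ∈ Set.Ioo (-(1/2)) (1/2)) (hmono : MonotoneOn b (Set.Iio n))
    {z : ℂ} (hz : z ∈ OmegaA n b a) : |(hFun n b a z).re - (hFun n b a z.re).re| ≤ 50 / 49 := by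
  obtain ⟨k, hk, hzk⟩ := mem_OmegaA.mp hz
  have hc : ∀ j, 0 < 1 / (2 ^ j * a) := fun j => by have := ha.1; positivity
  rw [re_hFun_sub_re_hFun]
  calc |∑ j ∈ Finset.range n, 1 / (2 ^ j * a) *
          ((arctan ((z - b j) / a)).re - (arctan ((z.re - b j : ℂ) / a)).re)|
      ≤ ∑ j ∈ Finset.range n, 1 / (2 ^ j * a) * (25 / 49 * a) := by
        refine (Finset.abs_sum_le_sum_abs _ _).trans (Finset.sum_le_sum fun j hj => ?_)
        rw [abs_mul, abs_of_pos (hc j)]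
        exact mul_le_mul_of_nonneg_left (abs_re_arctan_sub_le_of_mem_OmegaJ ha hb hmono hk
          (Finset.mem_range.mp hj) hzk) (hc j).le
    _ = 25 / 49 * ∑ j ∈ Finset.range n, (1 / 2 : ℝ) ^ j := by
        rw [Finset.mul_sum]
        refine Finset.sum_congr rfl fun j _ => ?_
        field_simp [ha.1.ne']
        rw [← mul_pow]; norm_num
    _ ≤ 50 / 49 := by linarith [sum_geometric_two_le n]

theorem sin_mul_re_sub_cos_mul_re_lt {G₁ G₂ h : ℂ → ℂ} {z w : ℂ} {u₀ : ℝ}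
    (hG₁ : ∀ ζ ∈ segment ℝ z w, HasDerivAt G₁ (-I * Complex.sin (h ζ)) ζ)
    (hG₂ : ∀ ζ ∈ segment ℝ z w, HasDerivAt G₂ (I * Complex.cos (h ζ)) ζ)
    (hh : ∀ ζ ∈ segment ℝ z w, |(h ζ).re - u₀| < π / 2)
    (hre : z.re = w.re) (him : z.im < w.im) :
    Real.sin u₀ * (G₁ z).re - Real.cos u₀ * (G₂ z).re
      < Real.sin u₀ * (G₁ w).re - Real.cos u₀ * (G₂ w).re := by
  have hΦ : ∀ ζ ∈ segment ℝ z w,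
      HasDerivAt (fun ζ => (Real.sin u₀ : ℂ) * G₁ ζ - (Real.cos u₀ : ℂ) * G₂ ζ)
        (-I * Complex.cos (h ζ - u₀)) ζ := fun ζ hζ =>
    (((hG₁ ζ hζ).const_mul _).sub ((hG₂ ζ hζ).const_mul _)).congr_deriv (by
      rw [Complex.cos_sub, ofReal_sin, ofReal_cos]; ring)
  have hwz : w - z = ((w.im - z.im : ℝ) : ℂ) * I := Complex.ext (by simp [hre]) (by simp)
  have key := re_lt_re_of_hasDerivAt_segment hΦ fun ζ hζ => by
    have hcos : 0 < Real.cos ((h ζ).re - u₀) := by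
      have := abs_lt.mp (hh ζ hζ)
      exact Real.cos_pos_of_mem_Ioo ⟨by linarith, by linarith⟩
    rw [hwz, show ((w.im - z.im : ℝ) : ℂ) * I * (-I * Complex.cos (h ζ - u₀))
        = ((w.im - z.im : ℝ) : ℂ) * Complex.cos (h ζ - u₀) by ring_nf; rw [I_sq]; ring,
      re_ofReal_mul, Complex.re_cos]
    simp only [sub_re, ofReal_re, sub_im, ofReal_im, sub_zero]
    have := Real.cosh_pos (h ζ).im
    have : 0 < w.im - z.im := by linarith
    positivity
  simpa only [sub_re, re_ofReal_mul] using key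

theorem eq_of_re_eq_of_mem_OmegaA (ha : a ∈ Set.Ioo 0 (1/2))
    (hb : ∀ j < n, b j ∈ Set.Ioo (-(1/2)) (1/2)) (hmono : MonotoneOn b (Set.Iio n))
    {G₁ G₂ : ℂ → ℂ}
    (hG₁ : ∀ ζ ∈ OmegaA n b a, HasDerivAt G₁ (-I * Complex.sin (hFun n b a ζ)) ζ)
    (hG₂ : ∀ ζ ∈ OmegaA n b a, HasDerivAt G₂ (I * Complex.cos (hFun n b a ζ)) ζ)
    {z w : ℂ} (hz : z ∈ OmegaA n b a) (hw : w ∈ OmegaA n b a) (hre : z.re = w.re)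
    (h₁ : (G₁ z).re = (G₁ w).re) (h₂ : (G₂ z).re = (G₂ w).re) : z = w := by
  wlog him : z.im ≤ w.im generalizing z w
  · exact (this hw hz hre.symm h₁.symm h₂.symm (le_of_not_ge him)).symm
  rcases him.lt_or_eq with hlt | heq
  · have hseg := segment_subset_OmegaA_of_re_eq hz hw hre
    have hosc : ∀ ζ ∈ segment ℝ z w, |(hFun n b a ζ).re - (hFun n b a z.re).re| < π / 2 :=
      fun ζ hζ => by
        have := abs_re_hFun_sub_re_hFun_re_le ha hb hmono (hseg hζ)
        rw [(re_eq_and_im_mem_uIcc_of_mem_segment hre hζ).1] at this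
        linarith [pi_gt_three]
    have := sin_mul_re_sub_cos_mul_re_lt (fun ζ hζ => hG₁ ζ (hseg hζ))
      (fun ζ hζ => hG₂ ζ (hseg hζ)) hosc hre hlt
    rw [h₁, h₂] at this
    exact absurd this (lt_irrefl _)
  · exact Complex.ext hre heq

end Omega

theorem vec3_inj {x y z x' y' z' : ℝ} :
    vec3 x y z = vec3 x' y' z' ↔ x = x' ∧ y = y' ∧ z = z' := by
  simp [vec3]

theorem stmt17_general (n : ℕ) (b : ℕ → ℝ)
    (hb0 : -(1/2) < b 0) (hbn : b (n - 1) < 1/2)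
    (hbmono : ∀ j, j + 1 < n → b j < b (j + 1))
    (a : ℝ) (ha : a ∈ Set.Ioo (0 : ℝ) (1/2))
    (U : Set ℂ) (hUΩ : OmegaA n b a ⊆ U)
    (G₁ G₂ G₃ : ℂ → ℂ)
    (hG₁ : ∀ z ∈ U, HasDerivAt G₁
      ((1/2) * (Complex.exp (-Complex.I * hFun n b a z)
        - Complex.exp (Complex.I * hFun n b a z))) z)
    (hG₂ : ∀ z ∈ U, HasDerivAt G₂
      ((Complex.I/2) * (Complex.exp (-Complex.I * hFun n b a z)
        + Complex.exp (Complex.I * hFun n b a z))) z)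
    (hG₃ : ∀ z ∈ U, HasDerivAt G₃ 1 z)
    (F : ℂ → EuclideanSpace ℝ (Fin 3))
    (hF : ∀ z ∈ U, F z = vec3 (G₁ z).re (G₂ z).re (G₃ z).re)
    : Set.InjOn F (OmegaA n b a) := by
  have hmono : StrictMonoOn b (Set.Iio n) :=
    strictMonoOn_of_lt_add_one Set.ordConnected_Iio fun j _ _ hj => hbmono j hj
  have hb : ∀ j < n, b j ∈ Set.Ioo (-(1/2)) (1/2) := fun j hj =>
    ⟨hb0.trans_le (hmono.monotoneOn (Set.mem_Iio.mpr (by omega)) hj (Nat.zero_le j)),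
      (hmono.monotoneOn hj (Set.mem_Iio.mpr (by omega)) (Nat.le_sub_one_of_lt hj)).trans_lt hbn⟩
  intro z hz w hw hFzw
  obtain ⟨h₁, h₂, h₃⟩ := vec3_inj.mp <| (hF z (hUΩ hz)).symm.trans (hFzw.trans (hF w (hUΩ hw)))
  have hre : z.re = w.re := by
    have := congrArg re (sub_eq_sub_of_mem_OmegaA hb (fun ζ hζ => hG₃ ζ (hUΩ hζ)) hz hw)
    simp only [sub_re, h₃, sub_self] at this
    linarith
  exact eq_of_re_eq_of_mem_OmegaA ha hb hmono.monotoneOn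
    (fun ζ hζ => (hG₁ ζ (hUΩ hζ)).congr_deriv (half_mul_exp_sub_exp _))
    (fun ζ hζ => (hG₂ ζ (hUΩ hζ)).congr_deriv (I_div_two_mul_exp_add_exp _)) hz hw hre h₁ h₂

/-- For every `a ∈ (0,1/2)`, the Weierstrass immersion
`F_a : Ω_a → ℝ³` (encoded via primitives `G₁, G₂, G₃` on an open set `U ⊇ Ω_a`) is
injective on `Ω_a`; that is, `F_a` is an embedding of the domain `Ω_a`. -/
theorem stmt17 (n : ℕ) (hn : 1 ≤ n) (b : ℕ → ℝ)
    (hb0 : -(1/2) < b 0) (hbn : b (n - 1) < 1/2)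
    (hbmono : ∀ j, j + 1 < n → b j < b (j + 1))
    (a : ℝ) (ha : a ∈ Set.Ioo (0 : ℝ) (1/2))
    (U : Set ℂ) (hUo : IsOpen U) (hUΩ : OmegaA n b a ⊆ U)
    (G₁ G₂ G₃ : ℂ → ℂ)
    (hG₁ : ∀ z ∈ U, HasDerivAt G₁
      ((1/2) * (Complex.exp (-Complex.I * hFun n b a z)
        - Complex.exp (Complex.I * hFun n b a z))) z)
    (hG₂ : ∀ z ∈ U, HasDerivAt G₂
      ((Complex.I/2) * (Complex.exp (-Complex.I * hFun n b a z)
        + Complex.exp (Complex.I * hFun n b a z))) z)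
    (hG₃ : ∀ z ∈ U, HasDerivAt G₃ 1 z)
    (hG₁0 : G₁ 0 = 0) (hG₂0 : G₂ 0 = 0) (hG₃0 : G₃ 0 = 0)
    (F : ℂ → EuclideanSpace ℝ (Fin 3))
    (hF : ∀ z ∈ U, F z = vec3 (G₁ z).re (G₂ z).re (G₃ z).re)
    : Set.InjOn F (OmegaA n b a) :=
  stmt17_general n b hb0 hbn hbmono a ha U hUΩ G₁ G₂ G₃ hG₁ hG₂ hG₃ F hF
end
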